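/- arXiv:1701.05115 — 5 statements merged into one kernel-verified Lean document; each statement's English description precedes it below -/
import Mathlib

section
/- Let G be a (partially) ordered abelian group and ⊳ a system of ideals for G. The following are equivalent: (1) ⊳ is regular, i.e. there exists a regular entailment relation ⊢ for G such that A ⊳ b ⟺ A ⊢ {b} for all nonempty finite subsets A of G and all b ∈ G; (2) ⊳ satisfies the cancellation property: for all nonempty finite subsets A, X of G and all b ∈ G, if (A + X) ⊳ (b + x) holds for every x ∈ X, then A ⊳ b. -/
open Pointwise

/-- A single-conclusion entailment relation for a set `G`. -/
structure IsSCEntail {G : Type*} [DecidableEq G] (r : Finset G → G → Prop) : Prop where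
  refl : ∀ a : G, r {a} a
  mono : ∀ ⦃A : Finset G⦄ (A' : Finset G) ⦃b : G⦄, A.Nonempty → r A b → r (A ∪ A') b
  trans : ∀ ⦃A : Finset G⦄ ⦃b c : G⦄, A.Nonempty → r A c → r (insert c A) b → r A b

/-- A system of ideals for an ordered commutative monoid `G`. -/
structure IsIdealSystem {G : Type*} [DecidableEq G] [AddCommMonoid G] [PartialOrder G]
    [IsOrderedAddMonoid G]
    (r : Finset G → G → Prop) : Prop where
  toIsSCEntail : IsSCEntail r
  le_entail : ∀ ⦃a b : G⦄, a ≤ b → r {a} b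
  equivariant : ∀ ⦃A : Finset G⦄ ⦃b : G⦄ (x : G), A.Nonempty → r A b →
    r (A.image (fun a => x + a)) (x + b)

/-- An unbounded entailment relation on a set `G`: a relation between pairs of
nonempty finite subsets of `G` that is reflexive, monotone and transitive. -/
structure IsEntailRel {G : Type*} [DecidableEq G] (r : Finset G → Finset G → Prop) : Prop where
  refl : ∀ a : G, r {a} {a}
  mono : ∀ ⦃A B : Finset G⦄ (A' B' : Finset G), A.Nonempty → B.Nonempty → r A B →
    r (A ∪ A') (B ∪ B')
  trans : ∀ ⦃A B : Finset G⦄ ⦃c : G⦄, A.Nonempty → B.Nonempty → r A (insert c B) →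
    r (insert c A) B → r A B

/-- An equivariant entailment relation for an ordered abelian group `G`: an unbounded
entailment relation that preserves the order and is equivariant. -/
structure IsEquivEntailRel {G : Type*} [DecidableEq G] [AddCommGroup G] [PartialOrder G]
    [IsOrderedAddMonoid G]
    (r : Finset G → Finset G → Prop) : Prop where
  toIsEntailRel : IsEntailRel r
  le_entail : ∀ ⦃a b : G⦄, a ≤ b → r {a} {b}
  equivariant : ∀ ⦃A B : Finset G⦄ (x : G), A.Nonempty → B.Nonempty → r A B →
    r (A.image (fun a => x + a)) (B.image (fun b => x + b))

/-- A regular entailment relation for an ordered abelian group `G`: an equivariant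
entailment relation satisfying the regularity axiom
`{x + a, y + b} ⊢ {y + a, x + b}`. -/
structure IsRegularEntailRel {G : Type*} [DecidableEq G] [AddCommGroup G] [PartialOrder G]
    [IsOrderedAddMonoid G]
    (r : Finset G → Finset G → Prop) : Prop where
  toIsEquivEntailRel : IsEquivEntailRel r
  regular : ∀ a b x y : G, r {x + a, y + b} {y + a, x + b}

section RegAux

variable {G : Type*} [DecidableEq G] [AddCommGroup G] [PartialOrder G] [IsOrderedAddMonoid G] {E : Finset G → Finset G → Prop}

set_option linter.unusedSectionVars false in
private lemma IsEntailRel.mono' (hE : IsEntailRel E) {A B A' B' : Finset G}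
    (hA : A.Nonempty) (hB : B.Nonempty) (hsA : A ⊆ A') (hsB : B ⊆ B') (h : E A B) :
    E A' B' := by
  have := hE.mono A' B' hA hB h
  rwa [Finset.union_eq_right.mpr hsA, Finset.union_eq_right.mpr hsB] at this

/-- shifted copy of a finset -/
private def shf {G : Type*} [DecidableEq G] [AddCommGroup G] [PartialOrder G] [IsOrderedAddMonoid G]
    (δ : G) (A : Finset G) : Finset G := A.image (δ + ·)

private lemma mem_shf {δ t : G} {A : Finset G} : t ∈ shf δ A ↔ ∃ a ∈ A, δ + a = t := by
  simp only [shf, Finset.mem_image]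

private lemma regInst (hE : IsRegularEntailRel E) (w₁ w₂ d : G) :
    E {w₁ - d, w₂ + d} {w₁, w₂} := by
  have h0 := hE.regular w₁ (w₂ + d) (-d) 0
  rw [show -d + w₁ = w₁ - d by abel, show (0:G) + (w₂ + d) = w₂ + d by abel,
    show (0:G) + w₁ = w₁ by abel, show -d + (w₂ + d) = w₂ by abel] at h0
  exact h0

private lemma res (hE : IsRegularEntailRel E) {C B : Finset G} (hC : C.Nonempty)
    (hB : B.Nonempty) (w₁ w₂ d : G) (h1 : E (insert w₁ C) B) (h2 : E (insert w₂ C) B) :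
    E (C ∪ {w₁ - d, w₂ + d}) B := by
  have hEr := hE.toIsEquivEntailRel.toIsEntailRel
  set C' := C ∪ {w₁ - d, w₂ + d} with hC'def
  have hC' : C'.Nonempty := Finset.Nonempty.mono Finset.subset_union_left hC
  have hIa : E C' (insert w₂ (insert w₁ B)) := by
    refine hEr.mono' (by simp) (by simp) Finset.subset_union_right ?_ (regInst hE w₁ w₂ d)
    intro t ht
    simp only [Finset.mem_insert, Finset.mem_singleton] at ht
    simp only [Finset.mem_insert]
    tauto
  have hIb : E (insert w₂ C') (insert w₁ B) := by
    refine hEr.mono' (Finset.insert_nonempty _ _) hB ?_ (Finset.subset_insert _ _) h2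
    exact Finset.insert_subset_insert _ Finset.subset_union_left
  have hI : E C' (insert w₁ B) := hEr.trans hC' (Finset.insert_nonempty _ _) hIa hIb
  have hII : E (insert w₁ C') B := by
    refine hEr.mono' (Finset.insert_nonempty _ _) hB ?_ subset_rfl h1
    exact Finset.insert_subset_insert _ Finset.subset_union_left
  exact hEr.trans hC' hB hI hII

private lemma convGrp (hE : IsRegularEntailRel E) {A₀ B U : Finset G}
    (hA₀ : A₀.Nonempty) (hB : B.Nonempty) (δ₁ δ₂ : G)
    (h1 : E (A₀ ∪ U ∪ shf δ₁ A₀) B) (h2 : E (A₀ ∪ U ∪ shf δ₂ A₀) B) :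
    E (A₀ ∪ U ∪ shf (δ₁ + δ₂) A₀) B := by
  have hEr := hE.toIsEquivEntailRel.toIsEntailRel
  have hne : ∀ V : Finset G, (A₀ ∪ U ∪ V).Nonempty := fun V =>
    Finset.Nonempty.mono (Finset.subset_union_left.trans Finset.subset_union_left) hA₀
  suffices key : ∀ n (D₁ D₂ : Finset G), D₁ ⊆ A₀ → D₂ ⊆ A₀ →
      (A₀.card - D₁.card) + (A₀.card - D₂.card) ≤ n →
      E (A₀ ∪ U ∪ shf (δ₁ + δ₂) A₀ ∪ shf δ₁ D₁ ∪ shf δ₂ D₂) B by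
    have := key (A₀.card + A₀.card) ∅ ∅ (Finset.empty_subset _) (Finset.empty_subset _)
      (by omega)
    simpa only [shf, Finset.image_empty, Finset.union_empty] using this
  intro n
  induction n with
  | zero =>
    intro D₁ D₂ hD₁ hD₂ hcard
    have hc1 := Finset.card_le_card hD₁
    have : D₁ = A₀ := Finset.eq_of_subset_of_card_le hD₁ (by omega)
    subst this
    refine hEr.mono' (hne _) hB ?_ subset_rfl h1
    intro t ht
    simp only [Finset.mem_union] at ht ⊢
    tauto
  | succ n ih =>
    intro D₁ D₂ hD₁ hD₂ hcard
    by_cases e1 : A₀ ⊆ D₁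
    · have : D₁ = A₀ := subset_antisymm hD₁ e1
      subst this
      refine hEr.mono' (hne _) hB ?_ subset_rfl h1
      intro t ht
      simp only [Finset.mem_union] at ht ⊢
      tauto
    by_cases e2 : A₀ ⊆ D₂
    · have : D₂ = A₀ := subset_antisymm hD₂ e2
      subst this
      refine hEr.mono' (hne _) hB ?_ subset_rfl h2
      intro t ht
      simp only [Finset.mem_union] at ht ⊢
      tauto
    obtain ⟨a, ha, ha'⟩ := Finset.not_subset.mp e1
    obtain ⟨a', hb, hb'⟩ := Finset.not_subset.mp e2
    set W := A₀ ∪ U ∪ shf (δ₁ + δ₂) A₀ ∪ shf δ₁ D₁ ∪ shf δ₂ D₂ with hWdef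
    have hWsub : A₀ ⊆ W := by
      intro t ht
      simp only [hWdef, Finset.mem_union]
      tauto
    have hW : W.Nonempty := Finset.Nonempty.mono hWsub hA₀
    have hlt1 : D₁.card < A₀.card :=
      Finset.card_lt_card (Finset.ssubset_iff_subset_ne.mpr ⟨hD₁, fun hh => e1 (hh ▸ subset_rfl)⟩)
    have hlt2 : D₂.card < A₀.card :=
      Finset.card_lt_card (Finset.ssubset_iff_subset_ne.mpr ⟨hD₂, fun hh => e2 (hh ▸ subset_rfl)⟩)
    have H1 : E (insert (δ₁ + a) W) B := by
      have hkey := ih (insert a D₁) D₂ (Finset.insert_subset ha hD₁) hD₂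
        (by rw [Finset.card_insert_of_notMem ha']; omega)
      have heq : A₀ ∪ U ∪ shf (δ₁ + δ₂) A₀ ∪ shf δ₁ (insert a D₁) ∪ shf δ₂ D₂
          = insert (δ₁ + a) W := by
        rw [show shf δ₁ (insert a D₁) = insert (δ₁ + a) (shf δ₁ D₁) from
          Finset.image_insert _ _ _]
        ext t
        simp only [hWdef, Finset.mem_union, Finset.mem_insert]
        tauto
      rwa [heq] at hkey
    have H2 : E (insert (δ₂ + a') W) B := by
      have hkey := ih D₁ (insert a' D₂) hD₁ (Finset.insert_subset hb hD₂)
        (by rw [Finset.card_insert_of_notMem hb']; omega)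
      have heq : A₀ ∪ U ∪ shf (δ₁ + δ₂) A₀ ∪ shf δ₁ D₁ ∪ shf δ₂ (insert a' D₂)
          = insert (δ₂ + a') W := by
        rw [show shf δ₂ (insert a' D₂) = insert (δ₂ + a') (shf δ₂ D₂) from
          Finset.image_insert _ _ _]
        ext t
        simp only [hWdef, Finset.mem_union, Finset.mem_insert]
        tauto
      rwa [heq] at hkey
    have hres := res hE hW hB (δ₁ + a) (δ₂ + a') δ₁ H1 H2
    have habs : W ∪ {δ₁ + a - δ₁, δ₂ + a' + δ₁} = W := by
      apply Finset.union_eq_left.mpr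
      intro t ht
      simp only [Finset.mem_insert, Finset.mem_singleton] at ht
      rcases ht with rfl | rfl
      · exact hWsub (by rwa [show δ₁ + a - δ₁ = a by abel])
      · have : δ₂ + a' + δ₁ ∈ shf (δ₁ + δ₂) A₀ :=
          mem_shf.mpr ⟨a', hb, by abel⟩
        simp only [hWdef, Finset.mem_union]
        tauto
    rwa [habs] at hres

/-- column set: all shifts of `A₀` by `z - x` for `z ∈ S`. -/
private def colF {G : Type*} [DecidableEq G] [AddCommGroup G] [PartialOrder G] [IsOrderedAddMonoid G]
    (A₀ : Finset G) (x : G) (S : Finset G) : Finset G :=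
  S.biUnion fun z => shf (z - x) A₀

private lemma mem_colF {A₀ : Finset G} {x t : G} {S : Finset G} :
    t ∈ colF A₀ x S ↔ ∃ z ∈ S, ∃ a ∈ A₀, (z - x) + a = t := by
  simp only [colF, Finset.mem_biUnion, mem_shf]

private lemma master (hE : IsRegularEntailRel E) {A₀ B X : Finset G}
    (hA₀ : A₀.Nonempty) (hB : B.Nonempty)
    (H : ∀ x ∈ X, E (A₀ ∪ colF A₀ x X) B) :
    ∀ n (S : Finset G), S ⊆ X → ∀ x ∈ S, X.card - S.card ≤ n →
      E (A₀ ∪ colF A₀ x S) B := by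
  have hEr := hE.toIsEquivEntailRel.toIsEntailRel
  have hne : ∀ V : Finset G, (A₀ ∪ V).Nonempty := fun V =>
    Finset.Nonempty.mono Finset.subset_union_left hA₀
  intro n
  induction n with
  | zero =>
    intro S hS x hx hc
    have := Finset.card_le_card hS
    have hSX : S = X := Finset.eq_of_subset_of_card_le hS (by omega)
    subst hSX
    exact H x hx
  | succ n ih =>
    intro S hS x hx hc
    by_cases hXS : X ⊆ S
    · have hSX : S = X := subset_antisymm hS hXS
      subst hSX
      exact H x hx
    obtain ⟨y, hyX, hyS⟩ := Finset.not_subset.mp hXS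
    have hins : insert y S ⊆ X := Finset.insert_subset hyX hS
    have hlt : S.card < X.card :=
      Finset.card_lt_card (Finset.ssubset_iff_subset_ne.mpr
        ⟨hS, fun hh => hXS (hh ▸ subset_rfl)⟩)
    have hcard' : X.card - (insert y S).card ≤ n := by
      rw [Finset.card_insert_of_notMem hyS]; omega
    have Pxy : E (A₀ ∪ colF A₀ x (insert y S)) B :=
      ih (insert y S) hins x (Finset.mem_insert_of_mem hx) hcard'
    have Pyy : E (A₀ ∪ colF A₀ y (insert y S)) B :=
      ih (insert y S) hins y (Finset.mem_insert_self y S) hcard'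
    -- inner induction converting the `y`-column into the `x`-column
    have inner : ∀ V : Finset G, V ⊆ S →
        E (A₀ ∪ (colF A₀ x S ∪ shf (x - y) A₀ ∪ colF A₀ y V)) B →
        E (A₀ ∪ (colF A₀ x S ∪ shf (x - y) A₀)) B := by
      intro V
      induction V using Finset.induction_on with
      | empty =>
        intro _ h0
        simpa only [colF, Finset.biUnion_empty, Finset.union_empty] using h0
      | @insert w V hwV ihV =>
        intro hsub hbig
        have hwS : w ∈ S := hsub (Finset.mem_insert_self _ _)
        have h1 : E (A₀ ∪ (colF A₀ x S ∪ shf (x - y) A₀ ∪ colF A₀ y V)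
            ∪ shf (w - y) A₀) B := by
          refine hEr.mono' (hne _) hB ?_ subset_rfl hbig
          intro t ht
          simp only [Finset.mem_union, colF, Finset.biUnion_insert] at ht ⊢
          tauto
        have h2 : E (A₀ ∪ (colF A₀ x S ∪ shf (x - y) A₀ ∪ colF A₀ y V)
            ∪ shf (y - x) A₀) B := by
          refine hEr.mono' (hne _) hB ?_ subset_rfl Pxy
          intro t ht
          simp only [Finset.mem_union, colF, Finset.biUnion_insert] at ht ⊢
          tauto
        have h3 := convGrp hE hA₀ hB (w - y) (y - x) h1 h2
        rw [show (w - y) + (y - x) = w - x by abel] at h3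
        have habs : A₀ ∪ (colF A₀ x S ∪ shf (x - y) A₀ ∪ colF A₀ y V)
            ∪ shf (w - x) A₀ = A₀ ∪ (colF A₀ x S ∪ shf (x - y) A₀ ∪ colF A₀ y V) := by
          apply Finset.union_eq_left.mpr
          intro t ht
          obtain ⟨a, haA, rfl⟩ := mem_shf.mp ht
          have : (w - x) + a ∈ colF A₀ x S := mem_colF.mpr ⟨w, hwS, a, haA, rfl⟩
          simp only [Finset.mem_union]
          tauto
        rw [habs] at h3
        exact ihV ((Finset.subset_insert w V).trans hsub) h3
    have hTfull : E (A₀ ∪ (colF A₀ x S ∪ shf (x - y) A₀ ∪ colF A₀ y S)) B := by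
      refine hEr.mono' (hne _) hB ?_ subset_rfl Pyy
      intro t ht
      simp only [Finset.mem_union] at ht ⊢
      rcases ht with ht | ht
      · tauto
      obtain ⟨z, hz, a, haA, rfl⟩ := mem_colF.mp ht
      rcases Finset.mem_insert.mp hz with rfl | hzS
      · left; rwa [show (z - z) + a = a by abel]
      · by_cases hzx : z = x
        · subst hzx
          right; left; right
          exact mem_shf.mpr ⟨a, haA, by abel⟩
        · right; right
          exact mem_colF.mpr ⟨z, hzS, a, haA, rfl⟩
    have R := inner S subset_rfl hTfull
    rw [← Finset.union_assoc] at R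
    have h1' : E (A₀ ∪ colF A₀ x S ∪ shf (y - x) A₀) B := by
      refine hEr.mono' (hne _) hB ?_ subset_rfl Pxy
      intro t ht
      simp only [Finset.mem_union] at ht ⊢
      rcases ht with ht | ht
      · tauto
      obtain ⟨z, hz, a, haA, rfl⟩ := mem_colF.mp ht
      rcases Finset.mem_insert.mp hz with rfl | hzS
      · right; exact mem_shf.mpr ⟨a, haA, rfl⟩
      · left; right; exact mem_colF.mpr ⟨z, hzS, a, haA, rfl⟩
    have hfin := convGrp hE hA₀ hB (y - x) (x - y) h1' R
    rw [show (y - x) + (x - y) = (0:G) by abel] at hfin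
    have habs : A₀ ∪ colF A₀ x S ∪ shf 0 A₀ = A₀ ∪ colF A₀ x S := by
      apply Finset.union_eq_left.mpr
      intro t ht
      obtain ⟨a, haA, rfl⟩ := mem_shf.mp ht
      simp only [Finset.mem_union, zero_add]
      tauto
    rwa [habs] at hfin

private lemma forward_cancel (hE : IsRegularEntailRel E)
    (A X : Finset G) (b : G) (hA : A.Nonempty) (hX : X.Nonempty)
    (hyp : ∀ x ∈ X, E (A + X) {b + x}) : E A {b} := by
  have hEe := hE.toIsEquivEntailRel
  have hEr := hEe.toIsEntailRel
  have H : ∀ x ∈ X, E (A ∪ colF A x X) {b} := by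
    intro x hx
    have h1 : E (A + X) {b + x} := hyp x hx
    have h2 := hEe.equivariant (-x) (hA.add hX) (Finset.singleton_nonempty _) h1
    rw [Finset.image_singleton] at h2
    rw [show -x + (b + x) = b by abel] at h2
    refine hEr.mono' ?_ (Finset.singleton_nonempty _) ?_ subset_rfl h2
    · exact (hA.add hX).image _
    · intro t ht
      obtain ⟨s, hs, rfl⟩ := Finset.mem_image.mp ht
      obtain ⟨a, haA, z, hzX, rfl⟩ := Finset.mem_add.mp hs
      have : (z - x) + a ∈ colF A x X := mem_colF.mpr ⟨z, hzX, a, haA, rfl⟩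
      simp only [Finset.mem_union]
      right
      rwa [show -x + (a + z) = (z - x) + a by abel]
  obtain ⟨x₀, hx₀⟩ := hX
  have hmas := master hE hA (Finset.singleton_nonempty b) H X.card {x₀}
    (Finset.singleton_subset_iff.mpr hx₀) x₀ (Finset.mem_singleton_self _) (by omega)
  have habs : A ∪ colF A x₀ {x₀} = A := by
    apply Finset.union_eq_left.mpr
    intro t ht
    obtain ⟨z, hz, a, haA, rfl⟩ := mem_colF.mp ht
    rcases Finset.mem_singleton.mp hz
    rwa [show (x₀ - x₀) + a = a by abel]
  rwa [habs] at hmas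

end RegAux

section IdealAux

variable {G : Type*} [DecidableEq G] [AddCommGroup G] [PartialOrder G] [IsOrderedAddMonoid G] {r : Finset G → G → Prop}

private lemma rmono' (h : IsIdealSystem r) {A A' : Finset G} {b : G}
    (hr : r A b) (hsub : A ⊆ A') (hA : A.Nonempty) : r A' b := by
  have := h.toIsSCEntail.mono A' hA hr
  rwa [Finset.union_eq_right.mpr hsub] at this

private lemma rcut (h : IsIdealSystem r) {T C : Finset G} {b : G}
    (hT : T.Nonempty) (hall : ∀ c ∈ C, r T c) (hC : C.Nonempty) (hCb : r C b) :
    r T b := by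
  have hstart : r (C ∪ T) b := h.toIsSCEntail.mono T hC hCb
  have main : ∀ C' : Finset G, (∀ c ∈ C', r T c) → r (C' ∪ T) b → r T b := by
    intro C'
    induction C' using Finset.induction_on with
    | empty => intro _ h0; rwa [Finset.empty_union] at h0
    | @insert c C' hcC ihC =>
      intro hall' h0
      have h1 : r (C' ∪ T) c :=
        rmono' h (hall' c (Finset.mem_insert_self _ _)) Finset.subset_union_right hT
      have h2 : r (insert c (C' ∪ T)) b := by
        rwa [show insert c C' ∪ T = insert c (C' ∪ T) from Finset.insert_union _ _ _] at h0
      exact ihC (fun c' hc' => hall' c' (Finset.mem_insert_of_mem hc'))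
        (h.toIsSCEntail.trans (Finset.Nonempty.mono Finset.subset_union_right hT) h1 h2)
  exact main C hall hstart

private lemma rpair (h : IsIdealSystem r)
    (hcan : ∀ (A X : Finset G) (b : G), A.Nonempty → X.Nonempty →
      (∀ x ∈ X, r (A + X) (b + x)) → r A b)
    (u : G) : r {u, -u} 0 := by
  refine hcan {u, -u} {u, 0} 0 ⟨u, by simp⟩ ⟨u, by simp⟩ ?_
  intro x hx
  rw [zero_add]
  have hmem : x ∈ ({u, -u} : Finset G) + {u, 0} := by
    rcases Finset.mem_insert.mp hx with rfl | hx0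
    · exact Finset.mem_add.mpr ⟨x, by simp, 0, by simp, add_zero x⟩
    · have hx0' := Finset.mem_singleton.mp hx0
      subst hx0'
      exact Finset.mem_add.mpr ⟨-u, by simp, u, by simp, neg_add_cancel u⟩
  exact rmono' h (h.toIsSCEntail.refl x) (Finset.singleton_subset_iff.mpr hmem)
    (Finset.singleton_nonempty x)

private lemma transE (h : IsIdealSystem r)
    (hcan : ∀ (A X : Finset G) (b : G), A.Nonempty → X.Nonempty →
      (∀ x ∈ X, r (A + X) (b + x)) → r A b)
    {A B : Finset G} {c : G} (hA : A.Nonempty) (hB : B.Nonempty)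
    (h1 : r (A - insert c B) 0) (h2 : r (insert c A - B) 0) : r (A - B) 0 := by
  set P := A - B with hP
  set Q := A - ({c} : Finset G) with hQ
  set S := ({c} : Finset G) - B with hS
  have hPne : P.Nonempty := hA.sub hB
  have hQne : Q.Nonempty := hA.sub (Finset.singleton_nonempty c)
  have hSne : S.Nonempty := (Finset.singleton_nonempty c).sub hB
  have e1 : A - insert c B = Q ∪ P := by
    ext t
    simp only [hP, hQ, Finset.mem_sub, Finset.mem_union, Finset.mem_insert,
      Finset.mem_singleton]
    constructor
    · rintro ⟨a, ha, w, hw, rfl⟩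
      rcases hw with rfl | hwB
      · exact Or.inl ⟨a, ha, w, rfl, rfl⟩
      · exact Or.inr ⟨a, ha, w, hwB, rfl⟩
    · rintro (⟨a, ha, w, hw, rfl⟩ | ⟨a, ha, w, hwB, rfl⟩)
      · exact ⟨a, ha, w, Or.inl hw, rfl⟩
      · exact ⟨a, ha, w, Or.inr hwB, rfl⟩
  have e2 : insert c A - B = S ∪ P := by
    ext t
    simp only [hP, hS, Finset.mem_sub, Finset.mem_union, Finset.mem_insert,
      Finset.mem_singleton]
    constructor
    · rintro ⟨a, ha, w, hw, rfl⟩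
      rcases ha with rfl | haA
      · exact Or.inl ⟨a, rfl, w, hw, rfl⟩
      · exact Or.inr ⟨a, haA, w, hw, rfl⟩
    · rintro (⟨a, ha, w, hw, rfl⟩ | ⟨a, haA, w, hw, rfl⟩)
      · exact ⟨a, Or.inl ha, w, hw, rfl⟩
      · exact ⟨a, Or.inr haA, w, hw, rfl⟩
  rw [e1] at h1
  rw [e2] at h2
  set Xc := insert (0 : G) (Q ∪ S) with hXc
  have hXcne : Xc.Nonempty := Finset.insert_nonempty _ _
  have hPsub : ∀ p ∈ P, p ∈ P + Xc := fun p hp =>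
    Finset.mem_add.mpr ⟨p, hp, 0, Finset.mem_insert_self _ _, add_zero p⟩
  have hQder : ∀ q ∈ Q, r (P + Xc) q := by
    intro q hq
    have heq := h.equivariant q (Finset.Nonempty.mono Finset.subset_union_left hSne) h2
    rw [add_zero] at heq
    refine rmono' h heq ?_
      (Finset.Nonempty.image (Finset.Nonempty.mono Finset.subset_union_left hSne) _)
    intro t ht
    obtain ⟨w, hw, rfl⟩ := Finset.mem_image.mp ht
    rcases Finset.mem_union.mp hw with hwS | hwP
    · obtain ⟨a, ha, cc, hcc, rfl⟩ := Finset.mem_sub.mp hq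
      obtain ⟨c1, hc1, bb, hbb, rfl⟩ := Finset.mem_sub.mp hwS
      have hcc' := Finset.mem_singleton.mp hcc
      have hc1' := Finset.mem_singleton.mp hc1
      subst hcc'
      subst hc1'
      exact hPsub _ (Finset.mem_sub.mpr ⟨a, ha, bb, hbb, by abel⟩)
    · exact Finset.mem_add.mpr ⟨w, hwP, q,
        Finset.mem_insert_of_mem (Finset.mem_union_left _ hq), add_comm w q⟩
  have hSder : ∀ s ∈ S, r (P + Xc) s := by
    intro s hs
    have heq := h.equivariant s (Finset.Nonempty.mono Finset.subset_union_left hQne) h1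
    rw [add_zero] at heq
    refine rmono' h heq ?_
      (Finset.Nonempty.image (Finset.Nonempty.mono Finset.subset_union_left hQne) _)
    intro t ht
    obtain ⟨w, hw, rfl⟩ := Finset.mem_image.mp ht
    rcases Finset.mem_union.mp hw with hwQ | hwP
    · obtain ⟨c1, hc1, bb, hbb, rfl⟩ := Finset.mem_sub.mp hs
      obtain ⟨a, ha, cc, hcc, rfl⟩ := Finset.mem_sub.mp hwQ
      have hcc' := Finset.mem_singleton.mp hcc
      have hc1' := Finset.mem_singleton.mp hc1
      subst hcc'
      subst hc1'
      exact hPsub _ (Finset.mem_sub.mpr ⟨a, ha, bb, hbb, by abel⟩)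
    · exact Finset.mem_add.mpr ⟨w, hwP, s,
        Finset.mem_insert_of_mem (Finset.mem_union_right _ hs), add_comm w s⟩
  have hPder : ∀ p ∈ P, r (P + Xc) p := fun p hp =>
    rmono' h (h.toIsSCEntail.refl p) (Finset.singleton_subset_iff.mpr (hPsub p hp))
      (Finset.singleton_nonempty p)
  refine hcan P Xc 0 hPne hXcne ?_
  intro x hx
  rw [zero_add]
  rcases Finset.mem_insert.mp hx with rfl | hx'
  · refine rcut h (hPne.add hXcne) ?_
      (Finset.Nonempty.mono Finset.subset_union_right hPne) h1
    intro z hz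
    rcases Finset.mem_union.mp hz with hzQ | hzP
    · exact hQder z hzQ
    · exact hPder z hzP
  · rcases Finset.mem_union.mp hx' with hq | hs
    · exact hQder x hq
    · exact hSder x hs

end IdealAux

/-- A system of ideals for an ordered abelian group `G` is regular (i.e. it is the
restriction of a regular entailment relation) if and only if it satisfies the
cancellation property. -/
theorem ideal_system_regular_iff_cancellative {G : Type*} [DecidableEq G]
    [AddCommGroup G] [PartialOrder G] [IsOrderedAddMonoid G] (r : Finset G → G → Prop) (h : IsIdealSystem r) :
    (∃ E : Finset G → Finset G → Prop, IsRegularEntailRel E ∧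
      ∀ (A : Finset G), A.Nonempty → ∀ b : G, (r A b ↔ E A {b})) ↔
    (∀ (A X : Finset G) (b : G), A.Nonempty → X.Nonempty →
      (∀ x ∈ X, r (A + X) (b + x)) → r A b) := by
  constructor
  · rintro ⟨E, hE, hiff⟩ A X b hA hX hyp
    have hyp' : ∀ x ∈ X, E (A + X) {b + x} := fun x hx =>
      (hiff _ (hA.add hX) _).mp (hyp x hx)
    exact (hiff A hA b).mpr (forward_cancel hE A X b hA hX hyp')
  · intro hcan
    refine ⟨fun A B => r (A - B) 0, ⟨⟨⟨?_, ?_, ?_⟩, ?_, ?_⟩, ?_⟩, ?_⟩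
    · -- refl
      intro a
      show r ({a} - {a}) 0
      rw [Finset.singleton_sub_singleton, sub_self]
      exact h.toIsSCEntail.refl 0
    · -- mono
      intro A B A' B' hA hB hr
      exact rmono' h hr
        (Finset.sub_subset_sub Finset.subset_union_left Finset.subset_union_left)
        (hA.sub hB)
    · -- trans
      intro A B c hA hB h1 h2
      exact transE h hcan hA hB h1 h2
    · -- le_entail
      intro a b hab
      show r ({a} - {b}) 0
      rw [Finset.singleton_sub_singleton]
      exact h.le_entail (sub_nonpos.mpr hab)
    · -- equivariant
      intro A B x hA hB hr
      show r ((A.image (fun a => x + a)) - (B.image (fun b => x + b))) 0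
      have heq : (A.image (fun a => x + a)) - (B.image (fun b => x + b)) = A - B := by
        ext t
        simp only [Finset.mem_sub, Finset.mem_image]
        constructor
        · rintro ⟨w, ⟨a, ha, rfl⟩, v, ⟨bb, hbb, rfl⟩, rfl⟩
          exact ⟨a, ha, bb, hbb, by abel⟩
        · rintro ⟨a, ha, bb, hbb, rfl⟩
          exact ⟨x + a, ⟨a, ha, rfl⟩, x + bb, ⟨bb, hbb, rfl⟩, by abel⟩
      rwa [heq]
    · -- regular
      intro a b x y
      show r ({x + a, y + b} - {y + a, x + b}) 0
      refine rmono' h (rpair h hcan (x - y)) ?_ (Finset.insert_nonempty _ _)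
      refine Finset.insert_subset ?_ (Finset.singleton_subset_iff.mpr ?_)
      · exact Finset.mem_sub.mpr ⟨x + a, Finset.mem_insert_self _ _, y + a, by simp, by abel⟩
      · exact Finset.mem_sub.mpr ⟨y + b, by simp, x + b, by simp, by abel⟩
    · -- the restriction
      intro A hA b
      constructor
      · intro hr
        show r (A - {b}) 0
        have heq := h.equivariant (-b) hA hr
        rw [neg_add_cancel] at heq
        refine rmono' h heq ?_ (hA.image _)
        intro t ht
        obtain ⟨a, ha, rfl⟩ := Finset.mem_image.mp ht
        exact Finset.mem_sub.mpr ⟨a, ha, b, Finset.mem_singleton_self _, by abel⟩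
      · intro hr0
        have hne : (A - ({b} : Finset G)).Nonempty := hA.sub (Finset.singleton_nonempty b)
        have heq := h.equivariant b hne hr0
        rw [add_zero] at heq
        refine rmono' h heq ?_ (hne.image _)
        intro t ht
        obtain ⟨w, hw, rfl⟩ := Finset.mem_image.mp ht
        obtain ⟨a, ha, bb, hbb, rfl⟩ := Finset.mem_sub.mp hw
        have hbb' := Finset.mem_singleton.mp hbb
        rw [hbb']
        rw [show b + (a - b) = a by abel]
        exact ha
end

section
/- Let G be a (partially) ordered abelian group. Define the relation ⊢₀ between nonempty finite subsets of G by A ⊢₀ B :⟺ there exists an integer n ≥ 1 and elements a ∈ A⁽ⁿ⁾ and b ∈ B⁽ⁿ⁾ with a ≤ b in G, where A⁽ⁿ⁾ denotes the n-fold sumset A + ⋯ + A. Then ⊢₀ is a regular entailment relation for G, and it is the finest one: for every regular entailment relation ⊢ for G, A ⊢₀ B implies A ⊢ B. -/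
open Pointwise

/-- The `n`-fold sumset `A⁽ⁿ⁾ = A + ⋯ + A` (`n` times). -/
def nfoldSumset {G : Type*} [DecidableEq G] [AddCommGroup G] [PartialOrder G] [IsOrderedAddMonoid G] (A : Finset G) :
    ℕ → Finset G
  | 0 => {0}
  | n + 1 => nfoldSumset A n + A

/-- The finest regular entailment relation for an ordered abelian group `G`:
`A ⊢₀ B` iff there are `n ≥ 1`, `a ∈ A⁽ⁿ⁾` and `b ∈ B⁽ⁿ⁾` with `a ≤ b`. -/
def finestRegRel {G : Type*} [DecidableEq G] [AddCommGroup G] [PartialOrder G] [IsOrderedAddMonoid G]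
    (A B : Finset G) : Prop :=
  ∃ n : ℕ, 1 ≤ n ∧ ∃ a ∈ nfoldSumset A n, ∃ b ∈ nfoldSumset B n, a ≤ b

section Aux

variable {G : Type*} [DecidableEq G] [AddCommGroup G] [PartialOrder G] [IsOrderedAddMonoid G]

lemma mem_nfold_one {A : Finset G} {a : G} (ha : a ∈ A) : a ∈ nfoldSumset A 1 := by
  have := Finset.add_mem_add (Finset.mem_singleton_self (0 : G)) ha
  show a ∈ nfoldSumset A 0 + A
  simpa [nfoldSumset] using this

lemma mem_nfold_add {A : Finset G} {a b : G} {n m : ℕ}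
    (ha : a ∈ nfoldSumset A n) (hb : b ∈ nfoldSumset A m) :
    a + b ∈ nfoldSumset A (n + m) := by
  induction m generalizing b with
  | zero =>
    simp only [nfoldSumset, Finset.mem_singleton] at hb
    subst hb; simpa using ha
  | succ m ih =>
    obtain ⟨b', hb', x, hx, rfl⟩ := Finset.mem_add.mp hb
    have h := Finset.add_mem_add (ih hb') hx
    have he : n + (m + 1) = (n + m) + 1 := by omega
    rw [he]
    show a + (b' + x) ∈ nfoldSumset A (n + m) + A
    rw [← add_assoc]
    exact h

lemma nfold_mono {A B : Finset G} (h : A ⊆ B) (n : ℕ) :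
    nfoldSumset A n ⊆ nfoldSumset B n := by
  induction n with
  | zero => exact subset_rfl
  | succ n ih => exact Finset.add_subset_add ih h

lemma nfold_smul {A : Finset G} {a : G} {n : ℕ} (ha : a ∈ nfoldSumset A n) (k : ℕ) :
    k • a ∈ nfoldSumset A (k * n) := by
  induction k with
  | zero => simp [nfoldSumset]
  | succ k ih =>
    have h := mem_nfold_add ih ha
    rw [succ_nsmul, show (k + 1) * n = k * n + n by ring]
    exact h

lemma nfold_insert {B : Finset G} {c : G} {n : ℕ} {b : G}
    (hb : b ∈ nfoldSumset (insert c B) n) :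
    ∃ k ≤ n, ∃ b₁ ∈ nfoldSumset B (n - k), b = b₁ + k • c := by
  induction n generalizing b with
  | zero => exact ⟨0, le_refl 0, b, hb, by simp⟩
  | succ n ih =>
    obtain ⟨b', hb', x, hx, rfl⟩ := Finset.mem_add.mp hb
    obtain ⟨k, hk, b₁, hb₁, rfl⟩ := ih hb'
    rcases Finset.mem_insert.mp hx with rfl | hx
    · refine ⟨k + 1, by omega, b₁, ?_, by rw [succ_nsmul]; abel⟩
      rwa [show n + 1 - (k + 1) = n - k by omega]
    · refine ⟨k, by omega, b₁ + x, ?_, by abel⟩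
      have h := mem_nfold_add hb₁ (mem_nfold_one hx)
      rwa [show n - k + 1 = n + 1 - k by omega] at h

lemma nfold_image {A : Finset G} {a : G} {n : ℕ} (ha : a ∈ nfoldSumset A n) (x : G) :
    n • x + a ∈ nfoldSumset (A.image (fun a => x + a)) n := by
  induction n generalizing a with
  | zero =>
    simp only [nfoldSumset, Finset.mem_singleton] at ha ⊢
    simp [ha]
  | succ n ih =>
    obtain ⟨a', ha', y, hy, rfl⟩ := Finset.mem_add.mp ha
    have hmem : x + y ∈ A.image (fun a => x + a) := Finset.mem_image_of_mem _ hy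
    have h := Finset.add_mem_add (ih ha') hmem
    rw [show (n + 1) • x + (a' + y) = (n • x + a') + (x + y) by rw [succ_nsmul]; abel]
    exact h

lemma nfold_exists_list {A : Finset G} {n : ℕ} {a : G} (ha : a ∈ nfoldSumset A n) :
    ∃ l : List G, l.length = n ∧ (∀ x ∈ l, x ∈ A) ∧ l.sum = a := by
  induction n generalizing a with
  | zero =>
    simp only [nfoldSumset, Finset.mem_singleton] at ha
    exact ⟨[], rfl, by simp, by simp [ha]⟩
  | succ n ih =>
    obtain ⟨a', ha', x, hx, rfl⟩ := Finset.mem_add.mp ha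
    obtain ⟨l, hl, hmem, hsum⟩ := ih ha'
    refine ⟨x :: l, by simp [hl], ?_, by simp [hsum, add_comm]⟩
    intro z hz
    rcases List.mem_cons.mp hz with rfl | hz
    · exact hx
    · exact hmem z hz

variable {r : Finset G → Finset G → Prop}

omit [AddCommGroup G] [PartialOrder G] [IsOrderedAddMonoid G] in
lemma entail_mono (hr : IsEntailRel r) {A B A' B' : Finset G} (hA : A ⊆ A') (hB : B ⊆ B')
    (hAne : A.Nonempty) (hBne : B.Nonempty) (h : r A B) : r A' B' := by
  have h2 := hr.mono A' B' hAne hBne h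
  rwa [Finset.union_eq_right.mpr hA, Finset.union_eq_right.mpr hB] at h2

lemma entail_eq2 (hr : IsRegularEntailRel r) {u v s t : G} (h : u + v = s + t) :
    r {u, v} {s, t} := by
  have hreg := hr.regular s v (u - s) 0
  have h1 : u - s + s = u := by abel
  have h2 : t = u + v - s := by rw [h]; abel
  have ht : u - s + v = t := by rw [h2]; abel
  rw [h1, zero_add, zero_add, ht] at hreg
  exact hreg

lemma entail_eq_list (hr : IsRegularEntailRel r) :
    ∀ (n : ℕ) (l₁ l₂ : List G), l₁.length = n → l₂.length = n → l₁ ≠ [] →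
      l₁.sum = l₂.sum → r l₁.toFinset l₂.toFinset := by
  intro n
  induction n with
  | zero =>
    intro l₁ l₂ h₁ _ hne _
    exact absurd (List.length_eq_zero_iff.mp h₁) hne
  | succ n ih =>
    intro l₁ l₂ h₁ h₂ hne hsum
    obtain ⟨x₀, t₁, rfl⟩ : ∃ x t, l₁ = x :: t := by
      cases l₁ with
      | nil => exact absurd rfl hne
      | cons a l => exact ⟨a, l, rfl⟩
    obtain ⟨y₀, l₂', rfl⟩ : ∃ y t, l₂ = y :: t := by
      cases l₂ with
      | nil => simp at h₂
      | cons a l => exact ⟨a, l, rfl⟩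
    cases t₁ with
    | nil =>
      have hl : l₂' = [] := by
        simp only [List.length_cons, List.length_nil] at h₁ h₂
        exact List.length_eq_zero_iff.mp (by omega)
      subst hl
      simp only [List.sum_cons, List.sum_nil, add_zero] at hsum
      subst hsum
      simpa using hr.toIsEquivEntailRel.toIsEntailRel.refl x₀
    | cons x₁ t =>
      have hl₂' : l₂' ≠ [] := by
        intro h
        subst h
        simp only [List.length_cons, List.length_nil] at h₁ h₂
        omega
      set c := x₀ + x₁ - y₀ with hc
      have h2 : r {x₀, x₁} {y₀, c} := entail_eq2 hr (by rw [hc]; abel)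
      have hsum' : x₀ + (x₁ + t.sum) = y₀ + l₂'.sum := by
        simpa using hsum
      have h3 : l₂'.sum = (x₀ + (x₁ + t.sum)) - y₀ := by rw [hsum']; abel
      have hrec : r (c :: t).toFinset l₂'.toFinset := by
        apply ih (c :: t) l₂'
        · simp only [List.length_cons] at h₁ ⊢; omega
        · simp only [List.length_cons] at h₂ ⊢; omega
        · simp
        · simp only [List.sum_cons]
          rw [hc, h3]; abel
      have hE := hr.toIsEquivEntailRel.toIsEntailRel
      have hAne : (x₀ :: x₁ :: t).toFinset.Nonempty := by simp
      have hBne : (y₀ :: l₂').toFinset.Nonempty := by simp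
      have hB'ne : l₂'.toFinset.Nonempty := by
        cases l₂' with
        | nil => exact absurd rfl hl₂'
        | cons a l => simp
      refine hE.trans (c := c) hAne hBne ?_ ?_
      · refine entail_mono hE ?_ ?_ (by simp) (by simp) h2
        · intro z hz
          simp only [Finset.mem_insert, Finset.mem_singleton] at hz
          simp only [List.toFinset_cons, Finset.mem_insert]
          tauto
        · intro z hz
          simp only [Finset.mem_insert, Finset.mem_singleton] at hz
          simp only [List.toFinset_cons, Finset.mem_insert]
          tauto
      · refine entail_mono hE ?_ ?_ (by simp) hB'ne hrec
        · intro z hz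
          simp only [List.toFinset_cons, Finset.mem_insert] at hz ⊢
          tauto
        · intro z hz
          simp only [List.toFinset_cons, Finset.mem_insert]
          simp only [List.mem_toFinset] at hz ⊢
          tauto

lemma entail_le_list (hr : IsRegularEntailRel r) (l₁ l₂ : List G)
    (h : l₁.length = l₂.length) (hne : l₁ ≠ []) (hsum : l₁.sum ≤ l₂.sum) :
    r l₁.toFinset l₂.toFinset := by
  obtain ⟨x, t, rfl⟩ : ∃ x t, l₁ = x :: t := by
    cases l₁ with
    | nil => exact absurd rfl hne
    | cons a l => exact ⟨a, l, rfl⟩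
  have hE := hr.toIsEquivEntailRel.toIsEntailRel
  have hl₂ : l₂ ≠ [] := by
    intro h'; subst h'; simp at h
  have hB'ne : l₂.toFinset.Nonempty := by
    cases l₂ with
    | nil => exact absurd rfl hl₂
    | cons a l => simp
  set d := l₂.sum - (x :: t).sum with hd
  have hd0 : 0 ≤ d := sub_nonneg.mpr hsum
  have h' : r ((x + d) :: t).toFinset l₂.toFinset := by
    apply entail_eq_list hr ((x :: t).length) _ _ (by simp) h.symm (by simp)
    simp only [List.sum_cons, hd]
    abel
  have hx : r {x} {x + d} := hr.toIsEquivEntailRel.le_entail (le_add_of_nonneg_right hd0)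
  refine hE.trans (c := x + d) (by simp) hB'ne ?_ ?_
  · refine entail_mono hE ?_ ?_ (by simp) (by simp) hx
    · intro z hz
      simp only [Finset.mem_singleton] at hz
      simp [hz]
    · intro z hz
      simp only [Finset.mem_singleton] at hz
      simp [hz]
  · refine entail_mono hE ?_ subset_rfl (by simp) hB'ne h'
    intro z hz
    simp only [List.toFinset_cons, Finset.mem_insert] at hz ⊢
    tauto

end Aux

/-- `⊢₀` is a regular entailment relation for `G`, and it is the finest one. -/
theorem finest_regular_entailment_relation {G : Type*} [DecidableEq G]
    [AddCommGroup G] [PartialOrder G] [IsOrderedAddMonoid G] :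
    IsRegularEntailRel (finestRegRel (G := G)) ∧
    ∀ r : Finset G → Finset G → Prop, IsRegularEntailRel r →
      ∀ A B : Finset G, A.Nonempty → B.Nonempty → finestRegRel A B → r A B := by
  constructor
  · refine ⟨⟨⟨?_, ?_, ?_⟩, ?_, ?_⟩, ?_⟩
    · -- refl
      intro a
      exact ⟨1, le_refl 1, a, mem_nfold_one (Finset.mem_singleton_self a), a,
        mem_nfold_one (Finset.mem_singleton_self a), le_refl a⟩
    · -- mono
      rintro A B A' B' _ _ ⟨n, hn, a, ha, b, hb, hab⟩
      exact ⟨n, hn, a, nfold_mono Finset.subset_union_left n ha, b,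
        nfold_mono Finset.subset_union_left n hb, hab⟩
    · -- trans
      rintro A B c hA hB ⟨n, hn, a, ha, b, hb, hab⟩ ⟨m, hm, a', ha', b', hb', hab'⟩
      obtain ⟨k, hk, b₁, hb₁, rfl⟩ := nfold_insert hb
      obtain ⟨j, hj, a₁, ha₁, rfl⟩ := nfold_insert ha'
      by_cases hk0 : k = 0
      · subst hk0
        exact ⟨n, hn, a, ha, b₁, by simpa using hb₁, by simpa using hab⟩
      · have hkm : 1 ≤ k * m := Nat.mul_pos (by omega) hm
        obtain ⟨n', rfl⟩ := Nat.exists_eq_add_of_le hk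
        obtain ⟨m', rfl⟩ := Nat.exists_eq_add_of_le hj
        refine ⟨j * ((k + n') - k) + k * (j + m'), le_trans hkm (Nat.le_add_left _ _),
          j • a + k • a₁, ?_, j • b₁ + k • b', ?_, ?_⟩
        · have h := mem_nfold_add (nfold_smul ha j) (nfold_smul ha₁ k)
          rwa [show j * (k + n') + k * ((j + m') - j) =
            j * ((k + n') - k) + k * (j + m') by
              simp only [Nat.add_sub_cancel_left]; ring] at h
        · exact mem_nfold_add (nfold_smul hb₁ j) (nfold_smul hb' k)
        · have hj1 : j • a ≤ j • b₁ + (j * k) • c := by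
            have h := nsmul_le_nsmul_right hab j
            rwa [smul_add, ← mul_smul] at h
          have hk1 : k • a₁ + (j * k) • c ≤ k • b' := by
            have h := nsmul_le_nsmul_right hab' k
            rwa [smul_add, ← mul_smul, mul_comm k j] at h
          have hfin : (j • a + k • a₁) + (j * k) • c ≤ (j • b₁ + k • b') + (j * k) • c := by
            calc (j • a + k • a₁) + (j * k) • c
                = j • a + (k • a₁ + (j * k) • c) := by abel
              _ ≤ (j • b₁ + (j * k) • c) + k • b' := add_le_add hj1 hk1
              _ = (j • b₁ + k • b') + (j * k) • c := by abel
          exact le_of_add_le_add_right hfin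
    · -- le_entail
      intro a b h
      exact ⟨1, le_refl 1, a, mem_nfold_one (Finset.mem_singleton_self a), b,
        mem_nfold_one (Finset.mem_singleton_self b), h⟩
    · -- equivariant
      rintro A B x _ _ ⟨n, hn, a, ha, b, hb, hab⟩
      exact ⟨n, hn, n • x + a, nfold_image ha x, n • x + b, nfold_image hb x,
        add_le_add_right hab _⟩
    · -- regular
      intro a b x y
      refine ⟨2, by omega, (x + a) + (y + b), ?_, (y + a) + (x + b), ?_,
        le_of_eq (by abel)⟩
      · exact mem_nfold_add (mem_nfold_one (by simp)) (mem_nfold_one (by simp))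
      · exact mem_nfold_add (mem_nfold_one (by simp)) (mem_nfold_one (by simp))
  · rintro r hr A B hA hB ⟨n, hn, a, ha, b, hb, hab⟩
    obtain ⟨l₁, hl₁, hl₁A, hs₁⟩ := nfold_exists_list ha
    obtain ⟨l₂, hl₂, hl₂B, hs₂⟩ := nfold_exists_list hb
    have hne : l₁ ≠ [] := by
      intro h; subst h; simp at hl₁; omega
    have hne₂ : l₂ ≠ [] := by
      intro h; subst h; simp at hl₂; omega
    have h := entail_le_list hr l₁ l₂ (by omega) hne (by rw [hs₁, hs₂]; exact hab)
    refine entail_mono hr.toIsEquivEntailRel.toIsEntailRel ?_ ?_ ?_ ?_ h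
    · intro z hz; exact hl₁A z (List.mem_toFinset.mp hz)
    · intro z hz; exact hl₂B z (List.mem_toFinset.mp hz)
    · cases l₁ with
      | nil => exact absurd rfl hne
      | cons a l => simp
    · cases l₂ with
      | nil => exact absurd rfl hne₂
      | cons a l => simp
end

section
/- (Lorenzen–Clifford–Dieudonné) A (partially) ordered abelian group G admits an embedding into some lattice-ordered abelian group — i.e. there exist a lattice-ordered abelian group H and a group homomorphism φ : G → H with φ(a) ≤ φ(b) if and only if a ≤ b — if and only if for every a ∈ G and every integer n ≥ 1, 0 ≤ n·a implies 0 ≤ a. -/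
universe u

/-! ### Forward direction: lattice-ordered abelian groups are semiclosed -/

section Forward

variable {H : Type u} [Lattice H] [AddCommGroup H] [AddLeftMono H] [AddRightMono H]

private lemma lcd_disj {x y z : H} (hx : 0 ≤ x) (hz : 0 ≤ z)
    (hxy : x ⊓ y = 0) (hxz : x ⊓ z = 0) : x ⊓ (y + z) = 0 := by
  have hy : 0 ≤ y := hxy ▸ inf_le_right
  have h1 : x ⊓ (y + z) ≤ z := by
    calc x ⊓ (y + z) ≤ (x + z) ⊓ (y + z) :=
          inf_le_inf_right _ (le_add_of_nonneg_right hz)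
    _ = (x ⊓ y) + z := (inf_add x y z).symm
    _ = z := by rw [hxy, zero_add]
  have h2 : x ⊓ (y + z) ≤ x ⊓ z := le_inf inf_le_left h1
  exact le_antisymm (hxz ▸ h2) (le_inf hx (add_le_add hy hz |>.trans_eq' (by simp)))

private lemma lcd_nsmul_nonneg {x : H} (hx : 0 ≤ x) : ∀ k : ℕ, 0 ≤ k • x := by
  intro k
  induction k with
  | zero => simp
  | succ k ih => rw [succ_nsmul]; calc (0:H) = 0 + 0 := by simp
                 _ ≤ k • x + x := add_le_add ih hx

private lemma lcd_semiclosed {a : H} {n : ℕ} (hn : 1 ≤ n) (h : 0 ≤ n • a) : 0 ≤ a := by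
  have key : ∀ k : ℕ, a⁻ ⊓ k • a⁺ = 0 := by
    intro k
    induction k with
    | zero => simpa using inf_eq_right.mpr (negPart_nonneg a)
    | succ k ih =>
      rw [succ_nsmul]
      exact lcd_disj (negPart_nonneg a) (posPart_nonneg a) ih
        (by rw [inf_comm]; exact posPart_inf_negPart_eq_zero a)
  have hsub : n • a⁺ - n • a⁻ = n • a := by
    rw [← smul_sub, posPart_sub_negPart]
  have h1 : n • a⁻ ≤ n • a⁺ := by
    have : 0 ≤ n • a⁺ - n • a⁻ := hsub ▸ h
    exact sub_nonneg.mp this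
  obtain ⟨m, rfl⟩ : ∃ m, n = m + 1 := ⟨n - 1, (Nat.succ_pred_eq_of_pos hn).symm⟩
  have h3 : a⁻ ≤ (m + 1) • a⁻ := by
    rw [succ_nsmul]
    calc a⁻ = 0 + a⁻ := by simp
    _ ≤ m • a⁻ + a⁻ := add_le_add (lcd_nsmul_nonneg (negPart_nonneg a) m) le_rfl
  have h4 : a⁻ ≤ (m + 1) • a⁺ := h3.trans h1
  have h5 : a⁻ ≤ 0 := (key (m + 1)) ▸ le_inf le_rfl h4
  exact negPart_eq_zero.mp (le_antisymm h5 (negPart_nonneg a))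

end Forward

/-! ### Cones producing linearly ordered quotients -/

/-- A total cone in an abelian group. -/
structure LCDCone (G : Type u) [AddCommGroup G] : Type u where
  Q : Set G
  zero_mem : (0 : G) ∈ Q
  add_mem : ∀ {x y : G}, x ∈ Q → y ∈ Q → x + y ∈ Q
  total : ∀ x : G, x ∈ Q ∨ -x ∈ Q

namespace LCDCone

variable {G : Type u} [AddCommGroup G] (c : LCDCone G)

/-- The subgroup of elements equivalent to zero. -/
def N : AddSubgroup G where
  carrier := {x | x ∈ c.Q ∧ -x ∈ c.Q}
  zero_mem' := ⟨c.zero_mem, by simpa using c.zero_mem⟩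
  add_mem' := fun ha hb => ⟨c.add_mem ha.1 hb.1, by
    rw [neg_add]; exact c.add_mem ha.2 hb.2⟩
  neg_mem' := fun h => ⟨h.2, by simpa using h.1⟩

private lemma le_wd {a₁ b₁ a₂ b₂ : G} (ha : a₂ - a₁ ∈ c.N) (hb : b₂ - b₁ ∈ c.N)
    (h : b₁ - a₁ ∈ c.Q) : b₂ - a₂ ∈ c.Q := by
  have : b₂ - a₂ = (b₁ - a₁) + ((b₂ - b₁) + (-(a₂ - a₁))) := by abel
  rw [this]
  exact c.add_mem h (c.add_mem hb.1 ha.2)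

noncomputable instance : LinearOrder (G ⧸ c.N) where
  le x y := Quotient.liftOn₂' x y (fun a b => b - a ∈ c.Q) (by
    intro a₁ b₁ a₂ b₂ ha hb
    have ha' : a₂ - a₁ ∈ c.N := by
      have := QuotientAddGroup.leftRel_apply.mp ha
      simpa [neg_add_eq_sub] using this
    have hb' : b₂ - b₁ ∈ c.N := by
      have := QuotientAddGroup.leftRel_apply.mp hb
      simpa [neg_add_eq_sub] using this
    refine propext ⟨fun h => c.le_wd ha' hb' h, fun h => c.le_wd ?_ ?_ h⟩
    · simpa using c.N.neg_mem ha'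
    · simpa using c.N.neg_mem hb')
  le_refl x := by
    induction x using Quotient.inductionOn' with
    | h a => show a - a ∈ c.Q; simpa using c.zero_mem
  le_trans x y z := by
    induction x using Quotient.inductionOn' with | h a =>
    induction y using Quotient.inductionOn' with | h b =>
    induction z using Quotient.inductionOn' with | h d =>
    intro h1 h2
    show d - a ∈ c.Q
    have : d - a = (d - b) + (b - a) := by abel
    rw [this]; exact c.add_mem h2 h1
  le_antisymm x y := by
    induction x using Quotient.inductionOn' with | h a =>
    induction y using Quotient.inductionOn' with | h b =>
    intro h1 h2
    apply Quotient.sound'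
    apply QuotientAddGroup.leftRel_apply.mpr
    refine ⟨?_, ?_⟩
    · simpa [neg_add_eq_sub] using h1
    · simpa [neg_add_eq_sub, neg_sub] using h2
  le_total x y := by
    induction x using Quotient.inductionOn' with | h a =>
    induction y using Quotient.inductionOn' with | h b =>
    rcases c.total (b - a) with h | h
    · exact Or.inl h
    · right; show a - b ∈ c.Q; simpa [neg_sub] using h
  toDecidableLE := Classical.decRel _

lemma mk_le_mk {a b : G} :
    (QuotientAddGroup.mk a : G ⧸ c.N) ≤ QuotientAddGroup.mk b ↔ b - a ∈ c.Q := Iff.rfl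

lemma covariant_le : ∀ x y z : G ⧸ c.N, x ≤ y → x + z ≤ y + z := by
  intro x y z
  induction x using Quotient.inductionOn' with | h a =>
  induction y using Quotient.inductionOn' with | h b =>
  induction z using Quotient.inductionOn' with | h d =>
  intro h
  show (QuotientAddGroup.mk (a + d) : G ⧸ c.N) ≤ QuotientAddGroup.mk (b + d)
  rw [mk_le_mk]
  have : b + d - (a + d) = b - a := by abel
  rw [this]; exact h

end LCDCone

/-! ### Existence of total cones via Zorn's lemma -/

section Zorn

variable {G : Type u} [AddCommGroup G] [PartialOrder G] [IsOrderedAddMonoid G]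

/-- Goodness of a cone avoiding `g`. -/
private def LCDGood (g : G) (Q : Set G) : Prop :=
  (∀ x : G, 0 ≤ x → x ∈ Q) ∧ (∀ x y : G, x ∈ Q → y ∈ Q → x + y ∈ Q) ∧
    (∀ (x : G) (k : ℕ), 1 ≤ k → k • x ∈ Q → x ∈ Q) ∧ g ∉ Q

private lemma lcd_good_nsmul {g : G} {Q : Set G} (hQ : LCDGood g Q) :
    ∀ (k : ℕ) (x : G), x ∈ Q → k • x ∈ Q := by
  intro k x hx
  induction k with
  | zero => simpa using hQ.1 0 le_rfl
  | succ k ih => rw [succ_nsmul]; exact hQ.2.1 _ _ ih hx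

private lemma lcd_exists_total_cone
    (hsemi : ∀ (a : G) (n : ℕ), 1 ≤ n → 0 ≤ n • a → 0 ≤ a)
    {g : G} (hg : ¬ 0 ≤ g) :
    ∃ c : LCDCone G, (∀ x : G, 0 ≤ x → x ∈ c.Q) ∧ g ∉ c.Q := by
  -- Zorn's lemma on good cones
  have hP : LCDGood g {x : G | 0 ≤ x} :=
    ⟨fun x hx => hx, fun x y hx hy => add_nonneg hx hy, fun x k hk h => hsemi x k hk h, hg⟩
  obtain ⟨Q, -, hQmax⟩ := zorn_subset_nonempty {Q : Set G | LCDGood g Q}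
    (by
      intro ch hch hchain hne
      refine ⟨⋃₀ ch, ⟨?_, ?_, ?_, ?_⟩, fun s hs => Set.subset_sUnion_of_mem hs⟩
      · intro x hx
        obtain ⟨s, hs⟩ := hne
        exact Set.mem_sUnion_of_mem ((hch hs).1 x hx) hs
      · rintro x y ⟨s, hs, hxs⟩ ⟨t, ht, hyt⟩
        rcases hchain.total hs ht with hst | hts
        · exact Set.mem_sUnion_of_mem ((hch ht).2.1 x y (hst hxs) hyt) ht
        · exact Set.mem_sUnion_of_mem ((hch hs).2.1 x y hxs (hts hyt)) hs
      · rintro x k hk ⟨s, hs, hxs⟩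
        exact Set.mem_sUnion_of_mem ((hch hs).2.2.1 x k hk hxs) hs
      · rintro ⟨s, hs, hgs⟩
        exact (hch hs).2.2.2 hgs)
    {x : G | 0 ≤ x} hP
  have hQ : LCDGood g Q := hQmax.prop
  -- the maximal good cone is total
  have htotal : ∀ x : G, x ∈ Q ∨ -x ∈ Q := by
    intro x
    by_contra hx
    push_neg at hx
    obtain ⟨hx1, hx2⟩ := hx
    -- extension construction
    have key : ∀ y : G, y ∉ Q →
        ∃ (k n : ℕ) (q : G), 1 ≤ k ∧ 1 ≤ n ∧ q ∈ Q ∧ k • g = q + n • y := by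
      intro y hy
      set Q' : Set G := {z : G | ∃ (k : ℕ), 1 ≤ k ∧ ∃ q ∈ Q, ∃ n : ℕ, k • z = q + n • y}
        with hQ'def
      have hQsub : Q ⊆ Q' := by
        intro q hq
        exact ⟨1, le_rfl, q, hq, 0, by simp⟩
      have hyQ' : y ∈ Q' := ⟨1, le_rfl, 0, hQ.1 0 le_rfl, 1, by simp⟩
      have hgQ' : g ∈ Q' := by
        by_contra hgQ'
        have hgood : LCDGood g Q' := by
          refine ⟨fun z hz => hQsub (hQ.1 z hz), ?_, ?_, hgQ'⟩
          · rintro z w ⟨k, hk, q, hq, n, hkz⟩ ⟨k', hk', q', hq', n', hkw⟩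
            refine ⟨k * k',
              Nat.one_le_iff_ne_zero.mpr (Nat.mul_ne_zero (by omega) (by omega)),
              k' • q + k • q',
              hQ.2.1 _ _ (lcd_good_nsmul hQ k' q hq) (lcd_good_nsmul hQ k q' hq'),
              k' * n + k * n', ?_⟩
            have ez : (k * k') • z = k' • q + (k' * n) • y := by
              rw [mul_comm, mul_smul, hkz, smul_add, ← mul_smul]
            have ew : (k * k') • w = k • q' + (k * n') • y := by
              rw [mul_smul, hkw, smul_add, ← mul_smul]
            calc (k * k') • (z + w) = (k * k') • z + (k * k') • w := smul_add _ _ _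
            _ = k' • q + k • q' + (k' * n + k * n') • y := by
                rw [ez, ew, add_smul]; abel
          · rintro z m hm ⟨k, hk, q, hq, n, hkz⟩
            exact ⟨k * m,
              Nat.one_le_iff_ne_zero.mpr (Nat.mul_ne_zero (by omega) (by omega)),
              q, hq, n, by rw [mul_smul]; exact hkz⟩
        have : Q' = Q := hQmax.eq_of_ge hgood hQsub
        exact hy (this ▸ hyQ')
      obtain ⟨k, hk, q, hq, n, hkg⟩ := hgQ'
      refine ⟨k, n, q, hk, ?_, hq, hkg⟩
      rcases Nat.eq_zero_or_pos n with rfl | hn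
      · exfalso
        apply hQ.2.2.2
        exact hQ.2.2.1 g k hk (by rw [hkg]; simpa using hq)
      · exact hn
    obtain ⟨k, n, q, hk, hn, hq, he⟩ := key x hx1
    obtain ⟨k', n', q', hk', hn', hq', he'⟩ := key (-x) hx2
    -- combine
    have hcomb : (n' * k + n * k') • g = n' • q + n • q' := by
      have e1 : (n' * k) • g = n' • q + (n' * n) • x := by
        rw [mul_smul, he, smul_add, ← mul_smul]
      have e2 : (n * k') • g = n • q' - (n * n') • x := by
        rw [mul_smul, he', smul_add, smul_neg, smul_neg, ← mul_smul, ← sub_eq_add_neg]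
      calc (n' * k + n * k') • g = (n' * k) • g + (n * k') • g := add_smul _ _ _
      _ = n' • q + (n' * n) • x + (n • q' - (n * n') • x) := by rw [e1, e2]
      _ = n' • q + n • q' := by rw [mul_comm n n']; abel
    have hmem : (n' * k + n * k') • g ∈ Q := by
      rw [hcomb]
      exact hQ.2.1 _ _ (lcd_good_nsmul hQ n' q hq) (lcd_good_nsmul hQ n q' hq')
    have h1 : 1 ≤ n' * k + n * k' :=
      (Nat.one_le_iff_ne_zero.mpr (Nat.mul_ne_zero (by omega) (by omega))).trans
        (Nat.le_add_right _ _)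
    exact hQ.2.2.2 (hQ.2.2.1 g _ h1 hmem)
  exact ⟨⟨Q, hQ.1 0 le_rfl, fun {a b} ha hb => hQ.2.1 a b ha hb, htotal⟩, hQ.1, hQ.2.2.2⟩

end Zorn

/-- Lorenzen–Clifford–Dieudonné theorem: an ordered abelian group `G` embeds into some
lattice-ordered abelian group if and only if `0 ≤ n·a` implies `0 ≤ a` for every
`a ∈ G` and every integer `n ≥ 1`. -/
theorem lorenzen_clifford_dieudonne {G : Type u} [AddCommGroup G] [PartialOrder G] [IsOrderedAddMonoid G] :
    (∃ (H : Type u) (_ : AddCommGroup H) (_ : Lattice H),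
      (∀ x y z : H, x ≤ y → x + z ≤ y + z) ∧
      ∃ φ : G → H, (∀ a b : G, φ (a + b) = φ a + φ b) ∧
        (∀ a b : G, φ a ≤ φ b ↔ a ≤ b)) ↔
    (∀ (a : G) (n : ℕ), 1 ≤ n → 0 ≤ n • a → 0 ≤ a) := by
  constructor
  · rintro ⟨H, _, _, hcov, φ, hadd, hiff⟩ a n hn h
    haveI : AddRightMono H := ⟨fun z x y hxy => hcov x y z hxy⟩
    haveI : AddLeftMono H := ⟨fun z x y hxy => by
      simpa [add_comm] using hcov x y z hxy⟩
    have hφ0 : φ 0 = 0 := by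
      have h0 : φ 0 + φ 0 = φ 0 + 0 := by rw [← hadd, add_zero, add_zero]
      exact add_left_cancel h0
    have hφn : ∀ (m : ℕ) (b : G), φ (m • b) = m • φ b := by
      intro m b
      induction m with
      | zero => simpa using hφ0
      | succ m ih => rw [succ_nsmul, succ_nsmul, hadd, ih]
    have h1 : 0 ≤ n • φ a := by
      have := (hiff 0 (n • a)).mpr h
      rwa [hφ0, hφn] at this
    have h2 : 0 ≤ φ a := lcd_semiclosed hn h1
    have := (hiff 0 a).mp (by rwa [hφ0])
    exact this
  · intro hsemi
    classical
    set S := {g : G // ¬ (0 : G) ≤ g} with hS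
    have hex : ∀ g : S, ∃ c : LCDCone G, (∀ x : G, 0 ≤ x → x ∈ c.Q) ∧ g.1 ∉ c.Q :=
      fun g => lcd_exists_total_cone hsemi g.2
    choose c hP hgQ using hex
    refine ⟨∀ g : S, G ⧸ (c g).N, inferInstance, inferInstance, ?_,
      fun a => fun g => QuotientAddGroup.mk a, ?_, ?_⟩
    · intro x y z hxy g
      exact (c g).covariant_le (x g) (y g) (z g) (hxy g)
    · intro a b
      funext g
      exact rfl
    · intro a b
      constructor
      · intro h
        by_contra hab
        have hg : ¬ (0 : G) ≤ b - a := fun h0 => hab (sub_nonneg.mp h0)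
        have := h ⟨b - a, hg⟩
        rw [LCDCone.mk_le_mk] at this
        exact hgQ ⟨b - a, hg⟩ this
      · intro h g
        rw [LCDCone.mk_le_mk]
        exact hP g _ (sub_nonneg.mpr h)
end

section
/- Let G be a (partially) ordered abelian group. Then there exists a lattice-ordered abelian group H and a group homomorphism φ : G → H such that for all integers k, ℓ ≥ 1 and all a₁, …, a_k, b₁, …, b_ℓ ∈ G: φ(a₁) ⊓ ⋯ ⊓ φ(a_k) ≤ φ(b₁) ⊔ ⋯ ⊔ φ(b_ℓ) holds in H if and only if there exist natural numbers n₁, …, n_k, m₁, …, m_ℓ with n₁ + ⋯ + n_k = m₁ + ⋯ + m_ℓ ≥ 1 such that n₁·a₁ + ⋯ + n_k·a_k ≤ m₁·b₁ + ⋯ + m_ℓ·b_ℓ in G. In particular, 0 ≤ φ(a) holds if and only if 0 ≤ n·a for some integer n ≥ 1. -/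
universe u

namespace FreeLgroupAux

structure TotalCone (G : Type u) [AddCommGroup G] [PartialOrder G] [IsOrderedAddMonoid G] : Type u where
  carrier : Set G
  add_mem' : ∀ ⦃x y : G⦄, x ∈ carrier → y ∈ carrier → x + y ∈ carrier
  pos_mem' : ∀ ⦃x : G⦄, 0 ≤ x → x ∈ carrier
  total' : ∀ x : G, x ∈ carrier ∨ -x ∈ carrier

variable {G : Type u} [AddCommGroup G] [PartialOrder G] [IsOrderedAddMonoid G]

namespace TotalCone

theorem zero_mem (P : TotalCone G) : (0 : G) ∈ P.carrier := P.pos_mem' le_rfl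

def ker (P : TotalCone G) : AddSubgroup G where
  carrier := {x | x ∈ P.carrier ∧ -x ∈ P.carrier}
  zero_mem' := ⟨P.zero_mem, by simpa using P.zero_mem⟩
  add_mem' := fun ha hb => ⟨P.add_mem' ha.1 hb.1, by
    rw [neg_add]; exact P.add_mem' ha.2 hb.2⟩
  neg_mem' := fun h => ⟨h.2, by simpa using h.1⟩

abbrev Quot (P : TotalCone G) : Type u := G ⧸ P.ker

def qle (P : TotalCone G) (x y : P.Quot) : Prop :=
  Quotient.liftOn₂ x y (fun u v => v - u ∈ P.carrier) (by
    intro u v u' v' hu hv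
    have hu' := QuotientAddGroup.leftRel_apply.mp hu
    have hv' := QuotientAddGroup.leftRel_apply.mp hv
    have h1 : u' - u ∈ P.carrier := by
      have := hu'.1; simpa [neg_add_eq_sub] using this
    have h2 : u - u' ∈ P.carrier := by
      have := hu'.2; simpa [neg_add_eq_sub, neg_sub] using this
    have h3 : v' - v ∈ P.carrier := by
      have := hv'.1; simpa [neg_add_eq_sub] using this
    have h4 : v - v' ∈ P.carrier := by
      have := hv'.2; simpa [neg_add_eq_sub, neg_sub] using this
    simp only [eq_iff_iff]
    constructor
    · intro h
      have := P.add_mem' (P.add_mem' h h3) h2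
      have e : v - u + (v' - v) + (u - u') = v' - u' := by abel
      rwa [e] at this
    · intro h
      have := P.add_mem' (P.add_mem' h h4) h1
      have e : v' - u' + (v - v') + (u' - u) = v - u := by abel
      rwa [e] at this)

theorem mk_qle_mk (P : TotalCone G) {a b : G} :
    P.qle (QuotientAddGroup.mk a) (QuotientAddGroup.mk b) ↔ b - a ∈ P.carrier := Iff.rfl

noncomputable instance instLin (P : TotalCone G) : LinearOrder P.Quot := by
  refine
  { le := P.qle
    le_refl := ?_
    le_trans := ?_
    le_antisymm := ?_
    le_total := ?_
    toDecidableLE := Classical.decRel _ }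
  · intro x
    induction x using QuotientAddGroup.induction_on with
    | _ a => show P.qle _ _; rw [mk_qle_mk]; simpa using P.zero_mem
  · intro x y z
    induction x using QuotientAddGroup.induction_on with
    | _ a =>
    induction y using QuotientAddGroup.induction_on with
    | _ b =>
    induction z using QuotientAddGroup.induction_on with
    | _ c =>
    show P.qle _ _ → P.qle _ _ → P.qle _ _
    rw [mk_qle_mk, mk_qle_mk, mk_qle_mk]
    intro h1 h2
    have := P.add_mem' h2 h1
    have e : c - b + (b - a) = c - a := by abel
    rwa [e] at this
  · intro x y
    induction x using QuotientAddGroup.induction_on with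
    | _ a =>
    induction y using QuotientAddGroup.induction_on with
    | _ b =>
    show P.qle _ _ → P.qle _ _ → _
    rw [mk_qle_mk, mk_qle_mk]
    intro h1 h2
    refine (QuotientAddGroup.eq).2 ?_
    show -a + b ∈ P.ker
    constructor
    · simpa [neg_add_eq_sub] using h1
    · simpa [neg_add_eq_sub, neg_sub] using h2
  · intro x y
    induction x using QuotientAddGroup.induction_on with
    | _ a =>
    induction y using QuotientAddGroup.induction_on with
    | _ b =>
    show P.qle _ _ ∨ P.qle _ _
    rw [mk_qle_mk, mk_qle_mk]
    rcases P.total' (b - a) with h | h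
    · exact Or.inl h
    · right; rwa [neg_sub] at h

instance instOrd (P : TotalCone G) : IsOrderedAddMonoid P.Quot := by
  refine { add_le_add_left := ?_ }
  intro x y h z
  rw [add_comm x z, add_comm y z]
  induction x using QuotientAddGroup.induction_on with
  | _ a =>
  induction y using QuotientAddGroup.induction_on with
  | _ b =>
  induction z using QuotientAddGroup.induction_on with
  | _ c =>
  show P.qle _ _
  have h' : P.qle _ _ := h
  rw [mk_qle_mk] at h'
  have : ((c + a : G) : P.Quot) = (c:G) + (a:G) := rfl
  rw [show ((c:G) + (a:G) : P.Quot) = ((c + a : G) : P.Quot) from rfl,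
      show ((c:G) + (b:G) : P.Quot) = ((c + b : G) : P.Quot) from rfl, mk_qle_mk]
  have e : c + b - (c + a) = b - a := by abel
  rwa [e]

theorem mk_le_mk (P : TotalCone G) {a b : G} :
    (QuotientAddGroup.mk a : P.Quot) ≤ QuotientAddGroup.mk b ↔ b - a ∈ P.carrier := Iff.rfl

theorem mk_mono (P : TotalCone G) {a b : G} (h : a ≤ b) :
    (QuotientAddGroup.mk a : P.Quot) ≤ QuotientAddGroup.mk b :=
  (P.mk_le_mk).2 (P.pos_mem' (by simpa using sub_nonneg.2 h))

end TotalCone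

theorem exists_totalCone {k l : ℕ} (a : Fin (k+1) → G) (b : Fin (l+1) → G)
    (hcon : ¬ ∃ (n : Fin (k + 1) → ℕ) (m : Fin (l + 1) → ℕ),
        (∑ i, n i) = (∑ j, m j) ∧ 1 ≤ ∑ i, n i ∧
        (∑ i, n i • a i) ≤ ∑ j, m j • b j) :
    ∃ P : TotalCone G, ∀ i j, b j - a i ∉ P.carrier := by
  classical
  set Bad : G → Prop := fun x => ∃ c : Fin (k+1) → Fin (l+1) → ℕ,
      1 ≤ (∑ i, ∑ j, c i j) ∧ (∑ i, ∑ j, c i j • (b j - a i)) = x with hBadDef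
  have bad_not_nonneg : ∀ x, Bad x → ¬ (0 ≤ x) := by
    rintro x ⟨c, hc1, rfl⟩ hx
    apply hcon
    refine ⟨fun i => ∑ j, c i j, fun j => ∑ i, c i j, Finset.sum_comm, hc1, ?_⟩
    have key : (∑ i, ∑ j, c i j • (b j - a i)) =
        (∑ j, (∑ i, c i j) • b j) - (∑ i, (∑ j, c i j) • a i) := by
      calc (∑ i, ∑ j, c i j • (b j - a i))
          = (∑ i, ∑ j, c i j • b j) - ∑ i, ∑ j, c i j • a i := by
            simp only [smul_sub, Finset.sum_sub_distrib]
        _ = (∑ j, (∑ i, c i j) • b j) - ∑ i, (∑ j, c i j) • a i := by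
            rw [Finset.sum_comm]
            simp only [← Finset.sum_smul]
    rw [key] at hx
    exact sub_nonneg.mp hx
  have bad_combo : ∀ x y (p q : ℕ), Bad x → Bad y → 1 ≤ p → Bad (p • x + q • y) := by
    rintro x y p q ⟨c, hc1, rfl⟩ ⟨d, hd1, rfl⟩ hp
    refine ⟨fun i j => p * c i j + q * d i j, ?_, ?_⟩
    · have h1 : (∑ i, ∑ j, (p * c i j + q * d i j))
          = p * (∑ i, ∑ j, c i j) + q * (∑ i, ∑ j, d i j) := by
        simp only [Finset.sum_add_distrib, Finset.mul_sum]
      rw [h1]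
      have : 1 * 1 ≤ p * (∑ i, ∑ j, c i j) := Nat.mul_le_mul hp hc1
      omega
    · simp only [add_smul, mul_smul, Finset.sum_add_distrib, Finset.smul_sum]
  -- Zorn
  set S : Set (Set G) := {P | (∀ ⦃x y⦄, x ∈ P → y ∈ P → x + y ∈ P) ∧
      (∀ ⦃x : G⦄, 0 ≤ x → x ∈ P) ∧ ∀ x ∈ P, ¬ Bad x} with hSdef
  have hP0 : {x : G | 0 ≤ x} ∈ S :=
    ⟨fun x y hx hy => add_nonneg hx hy, fun x hx => hx, fun x hx hb => bad_not_nonneg x hb hx⟩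
  obtain ⟨M, hM0sub, hMmax⟩ := zorn_subset_nonempty S (by
    intro c hcS hchain ⟨p0, hp0⟩
    refine ⟨⋃₀ c, ⟨?_, ?_, ?_⟩, fun s hs => Set.subset_sUnion_of_mem hs⟩
    · rintro x y ⟨A, hA, hxA⟩ ⟨B, hB, hyB⟩
      rcases hchain.total hA hB with h | h
      · exact ⟨B, hB, (hcS hB).1 (h hxA) hyB⟩
      · exact ⟨A, hA, (hcS hA).1 hxA (h hyB)⟩
    · intro x hx
      exact ⟨p0, hp0, (hcS hp0).2.1 hx⟩
    · rintro x ⟨A, hA, hxA⟩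
      exact (hcS hA).2.2 x hxA) {x : G | 0 ≤ x} hP0
  have hM : M ∈ S := hMmax.prop
  have hzeroM : (0 : G) ∈ M := hM.2.1 le_rfl
  have hsmulM : ∀ p ∈ M, ∀ t : ℕ, t • p ∈ M := by
    intro p hp t
    induction t with
    | zero => simpa using hzeroM
    | succ s ih => rw [succ_nsmul]; exact hM.1 ih hp
  -- extension step
  have hext : ∀ u : G, u ∉ M → ∃ p ∈ M, ∃ t : ℕ, 1 ≤ t ∧ Bad (p + t • u) := by
    intro u hu
    by_contra hno
    push_neg at hno
    set P' : Set G := {y | ∃ p ∈ M, ∃ t : ℕ, y = p + t • u} with hP'def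
    have hMP' : M ⊆ P' := fun p hp => ⟨p, hp, 0, by simp⟩
    have huP' : u ∈ P' := ⟨0, hzeroM, 1, by simp⟩
    have hP'S : P' ∈ S := by
      refine ⟨?_, fun x hx => hMP' (hM.2.1 hx), ?_⟩
      · rintro x y ⟨p, hp, t, rfl⟩ ⟨p', hp', t', rfl⟩
        exact ⟨p + p', hM.1 hp hp', t + t', by rw [add_smul]; abel⟩
      · rintro x ⟨p, hp, t, rfl⟩ hb
        rcases Nat.eq_zero_or_pos t with ht | ht
        · subst ht; simp at hb; exact hM.2.2 _ hp (by simpa using hb)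
        · exact (hno p hp t ht) hb
    have := hMmax.eq_of_subset hP'S hMP'
    rw [← this] at huP'
    exact hu huP'
  have htot : ∀ x : G, x ∈ M ∨ -x ∈ M := by
    intro x
    by_contra hx
    push_neg at hx
    obtain ⟨p, hp, t, ht, hbad⟩ := hext x hx.1
    obtain ⟨p', hp', t', ht', hbad'⟩ := hext (-x) hx.2
    have hw : Bad (t' • (p + t • x) + t • (p' + t' • (-x))) :=
      bad_combo _ _ t' t hbad hbad' ht'
    have he : t' • (p + t • x) + t • (p' + t' • (-x)) = t' • p + t • p' := by
      rw [smul_add, smul_add, ← mul_smul, ← mul_smul, smul_neg, mul_comm t t']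
      abel
    rw [he] at hw
    exact hM.2.2 _ (hM.1 (hsmulM p hp t') (hsmulM p' hp' t)) hw
  refine ⟨⟨M, hM.1, hM.2.1, htot⟩, ?_⟩
  intro i j hmem
  apply hM.2.2 _ hmem
  refine ⟨fun i' j' => if i' = i then (if j' = j then 1 else 0) else 0, ?_, ?_⟩
  · simp
  · simp [ite_smul]


end FreeLgroupAux


theorem fiber_key' {Q : Type*} [AddCommGroup Q] [LinearOrder Q] [IsOrderedAddMonoid Q] {k l : ℕ}
    (x : Fin (k+1) → Q) (y : Fin (l+1) → Q) (n : Fin (k+1) → ℕ) (m : Fin (l+1) → ℕ)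
    (hnm : ∑ i, n i = ∑ j, m j) (h1 : 1 ≤ ∑ i, n i)
    (h : ∑ i, n i • x i ≤ ∑ j, m j • y j)
    (i₀ : Fin (k+1)) (j₀ : Fin (l+1)) (hmin : ∀ i, x i₀ ≤ x i) (hmax : ∀ j, y j ≤ y j₀) :
    x i₀ ≤ y j₀ := by
  by_contra hlt
  push_neg at hlt
  have hA : (∑ i, n i) • x i₀ ≤ ∑ i, n i • x i := by
    rw [Finset.sum_smul]
    exact Finset.sum_le_sum fun i _ => nsmul_le_nsmul_right (hmin i) _
  have hB : ∑ j, m j • y j ≤ (∑ j, m j) • y j₀ := by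
    rw [Finset.sum_smul]
    exact Finset.sum_le_sum fun j _ => nsmul_le_nsmul_right (hmax j) _
  have hC : (∑ j, m j) • y j₀ < (∑ i, n i) • x i₀ := by
    rw [← hnm]
    have hpos : 0 < (∑ i, n i) • (x i₀ - y j₀) := nsmul_pos (sub_pos.2 hlt) (by omega)
    rw [smul_sub] at hpos
    exact sub_pos.mp hpos
  exact absurd (hA.trans (h.trans hB)) hC.not_ge

/-- The lattice-ordered abelian group freely generated by an ordered abelian group `G`:
there is a group homomorphism `φ : G → H` into a lattice-ordered abelian group such that
`φ(a₁) ⊓ ⋯ ⊓ φ(a_k) ≤ φ(b₁) ⊔ ⋯ ⊔ φ(b_ℓ)` holds iff there are natural numbers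
`n₁, …, n_k, m₁, …, m_ℓ` with `n₁ + ⋯ + n_k = m₁ + ⋯ + m_ℓ ≥ 1` and
`n₁·a₁ + ⋯ + n_k·a_k ≤ m₁·b₁ + ⋯ + m_ℓ·b_ℓ` in `G`. In particular `0 ≤ φ(a)` iff
`0 ≤ n·a` for some `n ≥ 1`. -/
theorem free_lgroup_on_ordered_group {G : Type u} [AddCommGroup G] [PartialOrder G] [IsOrderedAddMonoid G] :
    ∃ (H : Type u) (_ : AddCommGroup H) (_ : Lattice H),
      (∀ x y z : H, x ≤ y → x + z ≤ y + z) ∧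
      ∃ φ : G → H, (∀ a b : G, φ (a + b) = φ a + φ b) ∧
        (∀ (k ℓ : ℕ) (a : Fin (k + 1) → G) (b : Fin (ℓ + 1) → G),
          (Finset.univ.inf' Finset.univ_nonempty fun i => φ (a i)) ≤
              (Finset.univ.sup' Finset.univ_nonempty fun j => φ (b j)) ↔
            ∃ (n : Fin (k + 1) → ℕ) (m : Fin (ℓ + 1) → ℕ),
              (∑ i, n i) = (∑ j, m j) ∧ 1 ≤ ∑ i, n i ∧
              (∑ i, n i • a i) ≤ ∑ j, m j • b j) ∧
        (∀ a : G, 0 ≤ φ a ↔ ∃ n : ℕ, 1 ≤ n ∧ 0 ≤ n • a) := by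
  classical
  set H : Type u := ∀ P : FreeLgroupAux.TotalCone G, P.Quot with hHdef
  set φ : G → H := fun g P => (QuotientAddGroup.mk g : P.Quot) with hφdef
  have hmk_sum : ∀ (P : FreeLgroupAux.TotalCone G) (r : ℕ) (n : Fin r → ℕ) (v : Fin r → G),
      (QuotientAddGroup.mk (∑ i, n i • v i) : P.Quot)
        = ∑ i, n i • (QuotientAddGroup.mk (v i) : P.Quot) := by
    intro P r n v
    have : ((QuotientAddGroup.mk' P.ker) (∑ i, n i • v i))
        = ∑ i, n i • (QuotientAddGroup.mk' P.ker) (v i) := by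
      rw [map_sum]
      simp [map_nsmul]
    simpa using this
  have hmain : ∀ (k ℓ : ℕ) (a : Fin (k + 1) → G) (b : Fin (ℓ + 1) → G),
      (Finset.univ.inf' Finset.univ_nonempty fun i => φ (a i)) ≤
          (Finset.univ.sup' Finset.univ_nonempty fun j => φ (b j)) ↔
        ∃ (n : Fin (k + 1) → ℕ) (m : Fin (ℓ + 1) → ℕ),
          (∑ i, n i) = (∑ j, m j) ∧ 1 ≤ ∑ i, n i ∧
          (∑ i, n i • a i) ≤ ∑ j, m j • b j := by
    intro k ℓ a b
    constructor
    · intro hle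
      by_contra hcon
      obtain ⟨P, hP⟩ := FreeLgroupAux.exists_totalCone a b hcon
      have hPle := hle P
      rw [Finset.inf'_apply, Finset.sup'_apply] at hPle
      obtain ⟨i₀, _, hi₀⟩ := Finset.exists_mem_eq_inf' (Finset.univ_nonempty)
        (fun i => φ (a i) P)
      obtain ⟨j₀, _, hj₀⟩ := Finset.exists_mem_eq_sup' (Finset.univ_nonempty)
        (fun j => φ (b j) P)
      rw [hi₀, hj₀] at hPle
      exact hP i₀ j₀ ((P.mk_le_mk).1 hPle)
    · rintro ⟨n, m, hnm, h1, hle⟩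
      intro P
      rw [Finset.inf'_apply, Finset.sup'_apply]
      obtain ⟨i₀, _, hi₀⟩ := Finset.exists_mem_eq_inf' (Finset.univ_nonempty)
        (fun i => φ (a i) P)
      obtain ⟨j₀, _, hj₀⟩ := Finset.exists_mem_eq_sup' (Finset.univ_nonempty)
        (fun j => φ (b j) P)
      rw [hi₀, hj₀]
      have hsle : ∑ i, n i • (φ (a i) P) ≤ ∑ j, m j • (φ (b j) P) := by
        have := P.mk_mono hle
        rw [hmk_sum P _ n a, hmk_sum P _ m b] at this
        exact this
      refine fiber_key' (fun i => φ (a i) P) (fun j => φ (b j) P) n m hnm h1 hsle i₀ j₀ ?_ ?_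
      · intro i
        show φ (a i₀) P ≤ φ (a i) P
        rw [← hi₀]
        exact Finset.inf'_le (fun i => φ (a i) P) (Finset.mem_univ i)
      · intro j
        show φ (b j) P ≤ φ (b j₀) P
        rw [← hj₀]
        exact Finset.le_sup' (fun j => φ (b j) P) (Finset.mem_univ j)
  refine ⟨H, inferInstance, inferInstance, fun x y z h P => add_le_add_left (h P) (z P),
    φ, fun a b => rfl, hmain, ?_⟩
  intro a
  have h := hmain 0 0 (fun _ => (0 : G)) (fun _ => a)
  rw [Finset.inf'_const, Finset.sup'_const] at h
  have hφ0 : φ (0 : G) = 0 := rfl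
  rw [hφ0] at h
  constructor
  · intro h0
    obtain ⟨n, m, e1, e2, e3⟩ := h.mp h0
    simp only [Fin.sum_univ_succ, Fin.sum_univ_zero, add_zero, smul_zero] at e1 e2 e3
    exact ⟨m 0, e1 ▸ e2, by simpa using e3⟩
  · rintro ⟨N, hN1, hNa⟩
    exact h.mpr ⟨fun _ => N, fun _ => N, rfl,
      by simpa [Fin.sum_univ_succ] using hN1,
      by simpa [Fin.sum_univ_succ, smul_zero] using hNa⟩
end

section
/- (Prüfer's theorem) Let G be a (partially) ordered abelian group and ⊳ a system of ideals for G. Define the relation ⊨ by A ⊨ b :⟺ there exists a nonempty finite subset X of G such that (A + X) ⊳ (b + x) holds for every x ∈ X. Then: (1) ⊨ is a system of ideals for G and is coarser than ⊳ (A ⊳ b implies A ⊨ b); (2) ⊨ satisfies the cancellation property: if (A + X) ⊨ (b + x) holds for every x ∈ X (X a nonempty finite subset of G), then A ⊨ b; (3) ⊨ is the finest system of ideals coarser than ⊳ with the cancellation property: if ⊳' is a system of ideals for G coarser than ⊳ satisfying the cancellation property, then A ⊨ b implies A ⊳' b; (4) if G is ⊳-closed, meaning that for every nonempty finite X and b ∈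 G, (X ⊳ (b + x) for all x ∈ X) implies 0 ≤ b, then {a} ⊨ b implies a ≤ b. -/
open Pointwise

/-- The relation `⊨` obtained from a system of ideals `⊳` by Prüfer's construction:
`A ⊨ b` iff `(A + X) ⊳ (b + x)` for every `x` in some nonempty finite `X`. -/
def pruferRel {G : Type*} [DecidableEq G] [AddCommGroup G] [PartialOrder G] [IsOrderedAddMonoid G]
    (r : Finset G → G → Prop) (A : Finset G) (b : G) : Prop :=
  ∃ X : Finset G, X.Nonempty ∧ ∀ x ∈ X, r (A + X) (b + x)


section Helpers

variable {G : Type*} [DecidableEq G]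

theorem sce_subset {r : Finset G → G → Prop} (h : IsSCEntail r) {A B : Finset G} {b : G}
    (hA : A.Nonempty) (hAB : A ⊆ B) (hr : r A b) : r B b := by
  have := h.mono B hA hr
  rwa [Finset.union_eq_right.mpr hAB] at this

theorem sce_cut {r : Finset G → G → Prop} (h : IsSCEntail r) {A : Finset G}
    (hA : A.Nonempty) :
    ∀ (C : Finset G) {b : G}, (∀ c ∈ C, r A c) → r (A ∪ C) b → r A b := by
  intro C
  induction C using Finset.induction_on with
  | empty => intro b _ hr; simpa using hr
  | @insert c C' hcC ih =>
      intro b hC hr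
      rw [Finset.union_insert] at hr
      have h1 : (A ∪ C').Nonempty := hA.mono Finset.subset_union_left
      have h2 : r (A ∪ C') c :=
        sce_subset h hA Finset.subset_union_left (hC c (Finset.mem_insert_self c C'))
      exact ih (fun c' hc' => hC c' (Finset.mem_insert_of_mem hc')) (h.trans h1 h2 hr)

theorem image_add_left_eq {G : Type*} [DecidableEq G] [AddCommMonoid G]
    (x : G) (A : Finset G) : A.image (fun a => x + a) = {x} + A := by
  rw [Finset.singleton_add]
  simp [Finset.vadd_finset_def, vadd_eq_add]

theorem ideal_translate {G : Type*} [DecidableEq G] [AddCommMonoid G] [PartialOrder G] [IsOrderedAddMonoid G]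
    {r : Finset G → G → Prop} (h : IsIdealSystem r) {A : Finset G} {b : G} (x : G)
    (hA : A.Nonempty) (hr : r A b) : r (A + {x}) (b + x) := by
  have key := h.equivariant x hA hr
  have him : A.image (fun a => x + a) = A + {x} := by
    rw [image_add_left_eq]; exact add_comm _ _
  rwa [him, add_comm x b] at key

theorem sum_finset_nonempty {G : Type*} [DecidableEq G] [AddCommMonoid G] {ι : Type*}
    (s : Finset ι) (f : ι → Finset G) (hf : ∀ i ∈ s, (f i).Nonempty) :
    (∑ i ∈ s, f i).Nonempty := by
  induction s using Finset.cons_induction with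
  | empty => exact ⟨0, by simp⟩
  | cons i s hi ih =>
      rw [Finset.sum_cons]
      exact (hf i (by simp)).add (ih fun j hj => hf j (by simp [hj]))

theorem prufer_coarser {G : Type*} [DecidableEq G] [AddCommGroup G] [PartialOrder G] [IsOrderedAddMonoid G]
    {r : Finset G → G → Prop} (A : Finset G) (b : G) (hr : r A b) : pruferRel r A b := by
  refine ⟨{0}, ⟨0, by simp⟩, fun x hx => ?_⟩
  simp only [Finset.mem_singleton] at hx
  subst hx
  show r (A + 0) (b + 0)
  rwa [add_zero, add_zero]

end Helpers

/-- Prüfer's theorem: `⊨` is a system of ideals coarser than `⊳`, it satisfies the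
cancellation property, it is the finest system of ideals coarser than `⊳` with the
cancellation property, and if `G` is `⊳`-closed then `{a} ⊨ b` implies `a ≤ b`. -/
theorem prufer_theorem {G : Type*} [DecidableEq G] [AddCommGroup G] [PartialOrder G] [IsOrderedAddMonoid G]
    (r : Finset G → G → Prop) (h : IsIdealSystem r) :
    IsIdealSystem (pruferRel r) ∧
    (∀ (A : Finset G) (b : G), r A b → pruferRel r A b) ∧
    (∀ (A X : Finset G) (b : G), A.Nonempty → X.Nonempty →
      (∀ x ∈ X, pruferRel r (A + X) (b + x)) → pruferRel r A b) ∧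
    (∀ r' : Finset G → G → Prop, IsIdealSystem r' →
      (∀ (A : Finset G) (b : G), r A b → r' A b) →
      (∀ (A X : Finset G) (b : G), A.Nonempty → X.Nonempty →
        (∀ x ∈ X, r' (A + X) (b + x)) → r' A b) →
      ∀ (A : Finset G) (b : G), A.Nonempty → pruferRel r A b → r' A b) ∧
    ((∀ (X : Finset G) (b : G), X.Nonempty → (∀ x ∈ X, r X (b + x)) → 0 ≤ b) →
      ∀ a b : G, pruferRel r {a} b → a ≤ b) := by
  classical
  have hE := h.toIsSCEntail
  -- (2) cancellation property for pruferRel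
  have cancel : ∀ (A X : Finset G) (b : G), A.Nonempty → X.Nonempty →
      (∀ x ∈ X, pruferRel r (A + X) (b + x)) → pruferRel r A b := by
    intro A X b hA hX H
    simp only [pruferRel] at H
    choose! Y hYne hY using H
    have hWne : (∑ x ∈ X, Y x).Nonempty := sum_finset_nonempty X Y hYne
    set W := ∑ x ∈ X, Y x with hW
    refine ⟨X + W, hX.add hWne, fun z hz => ?_⟩
    rw [Finset.mem_add] at hz
    obtain ⟨x, hx, w, hw, rfl⟩ := hz
    have hdec : W = Y x + ∑ x' ∈ X.erase x, Y x' := (Finset.add_sum_erase X Y hx).symm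
    rw [hdec, Finset.mem_add] at hw
    obtain ⟨y, hy, v, hv, rfl⟩ := hw
    have h1 : r (A + X + Y x) (b + x + y) := hY x hx y hy
    have h2 : r (A + X + Y x + {v}) (b + x + y + v) :=
      ideal_translate h v ((hA.add hX).add (hYne x hx)) h1
    have hsub : A + X + Y x + {v} ⊆ A + (X + W) := by
      have e1 : A + X + Y x + {v} = (A + X) + (Y x + {v}) := by abel
      have e2 : A + (X + W) = (A + X) + (Y x + ∑ x' ∈ X.erase x, Y x') := by
        rw [← hdec]; abel
      rw [e1, e2]
      exact Finset.add_subset_add_left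
        (Finset.add_subset_add_left (Finset.singleton_subset_iff.mpr hv))
    have h3 := sce_subset hE (((hA.add hX).add (hYne x hx)).add
      (Finset.singleton_nonempty v)) hsub h2
    have e3 : b + (x + (y + v)) = b + x + y + v := by abel
    rwa [e3]
  refine ⟨?_, prufer_coarser, cancel, ?_, ?_⟩
  · -- pruferRel is a system of ideals
    constructor
    · constructor
      · exact fun a => prufer_coarser _ _ (hE.refl a)
      · rintro A A' b hA ⟨X, hXne, hX⟩
        refine ⟨X, hXne, fun x hx => ?_⟩
        exact sce_subset hE (hA.add hXne)
          (Finset.add_subset_add_right Finset.subset_union_left) (hX x hx)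
      · rintro A b c hA ⟨X, hXne, hX⟩ ⟨Y, hYne, hY⟩
        refine ⟨X + Y, hXne.add hYne, fun z hz => ?_⟩
        rw [Finset.mem_add] at hz
        obtain ⟨x, hx, y, hy, rfl⟩ := hz
        have hSne : (A + X + Y).Nonempty := (hA.add hXne).add hYne
        -- every element of {c} + Y + {x} is entailed by A + X + Y
        have hent : ∀ e ∈ ({c} : Finset G) + Y + {x}, r (A + X + Y) e := by
          intro e he
          rw [Finset.mem_add] at he
          obtain ⟨u, hu, x', hx', rfl⟩ := he
          rw [Finset.mem_add] at hu
          obtain ⟨c', hc', y', hy', rfl⟩ := hu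
          simp only [Finset.mem_singleton] at hc' hx'
          rw [hc', hx']
          have t1 : r (A + X + {y'}) (c + x + y') :=
            ideal_translate h y' (hA.add hXne) (hX x hx)
          have t2 : A + X + {y'} ⊆ A + X + Y :=
            Finset.add_subset_add_left (Finset.singleton_subset_iff.mpr hy')
          have t3 := sce_subset hE ((hA.add hXne).add (Finset.singleton_nonempty y'))
            t2 t1
          have e4 : c + y' + x = c + x + y' := by abel
          rwa [e4]
        have hb1 : r (insert c A + Y + {x}) (b + y + x) :=
          ideal_translate h x (((Finset.insert_nonempty c A).add hYne)) (hY y hy)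
        have hb2 : insert c A + Y + {x} ⊆ (A + X + Y) ∪ (({c} : Finset G) + Y + {x}) := by
          rw [Finset.insert_eq, Finset.union_add, Finset.union_add]
          apply Finset.union_subset
          · exact Finset.subset_union_right
          · refine Finset.Subset.trans ?_ Finset.subset_union_left
            have e5 : A + Y + {x} ⊆ A + Y + X :=
              Finset.add_subset_add_left (Finset.singleton_subset_iff.mpr hx)
            have e6 : A + Y + X = A + X + Y := by abel
            rwa [e6] at e5
        have hb3 := sce_subset hE (((Finset.insert_nonempty c A).add hYne).add
          (Finset.singleton_nonempty x)) hb2 hb1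
        have hb4 := sce_cut hE hSne _ hent hb3
        have e7 : b + (x + y) = b + y + x := by abel
        have e8 : A + (X + Y) = A + X + Y := by abel
        rwa [e7, e8]
    · intro a b hab
      exact prufer_coarser _ _ (h.le_entail hab)
    · rintro A b x hA ⟨X, hXne, hX⟩
      refine ⟨X, hXne, fun y hy => ?_⟩
      have key := h.equivariant x (hA.add hXne) (hX y hy)
      have e1 : A.image (fun a => x + a) + X = (A + X).image (fun a => x + a) := by
        rw [image_add_left_eq, image_add_left_eq, add_assoc]
      rw [e1, add_assoc]
      exact key
  · -- (3) finest such system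
    rintro r' h' hcoarse hcancel A b hA ⟨X, hXne, hX⟩
    exact hcancel A X b hA hXne (fun x hx => hcoarse _ _ (hX x hx))
  · -- (4) closedness
    rintro hclosed a b ⟨X, hXne, hX⟩
    have key : ∀ x ∈ X, r X ((-a + b) + x) := by
      intro x hx
      have t1 := h.equivariant (-a) ((Finset.singleton_nonempty a).add hXne) (hX x hx)
      have e : (({a} : Finset G) + X).image (fun t => -a + t) = X := by
        rw [image_add_left_eq, ← add_assoc, Finset.singleton_add_singleton, neg_add_cancel]
        show (0 : Finset G) + X = X
        rw [zero_add]
      rw [e, ← add_assoc] at t1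
      exact t1
    have h0 := hclosed X (-a + b) hXne key
    have := add_le_add_left h0 a
    simpa using this
end
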